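/- arXiv:2112.03484 — 4 statements merged into one kernel-verified Lean document; each statement's English description precedes it below -/
import Mathlib

section
/- Let M_1, …, M_n be DFAs over a common alphabet Σ, with each accepting set F_i nonempty and every state of M_i reachable from its initial state s_i, and let G be the labeled graph obtained from the first reduction construction applied to M_1, …, M_n. Then ⋃_{i=1}^n L(M_i) = Σ* if and only if ⟨G⟩ has a synchronizing deterministic presentation. -/
/-- A labeled graph over vertex type `V` and alphabet `A`, given by its
labeled-edge relation: `Edge p a q` means there is an edge labeled `a`
from `p` to `q`. -/
structure LabeledGraph (V A : Type) where
  Edge : V → A → V → Prop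

namespace LabeledGraph

variable {V A : Type}

/-- `G.Walk p w q` : there is a (finite) path from `p` to `q` labeled `w`. -/
def Walk (G : LabeledGraph V A) : V → List A → V → Prop
  | p, [], q => p = q
  | p, a :: w, q => ∃ r, G.Edge p a r ∧ Walk G r w q

/-- The follower set of a vertex: labels of finite paths starting at `q`. -/
def follower (G : LabeledGraph V A) (q : V) : Set (List A) :=
  { w | ∃ q', G.Walk q w q' }

/-- The transition action on sets of vertices: `S·w`. -/
def transSet (G : LabeledGraph V A) (S : Set V) (w : List A) : Set V :=
  { q' | ∃ q ∈ S, G.Walk q w q' }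

/-- `G` is deterministic (right-resolving). -/
def Deterministic (G : LabeledGraph V A) : Prop :=
  ∀ p a q q', G.Edge p a q → G.Edge p a q' → q = q'

/-- `G` is essential: every vertex has an outgoing and an incoming edge. -/
def Essential (G : LabeledGraph V A) : Prop :=
  ∀ q, (∃ a r, G.Edge q a r) ∧ (∃ a p, G.Edge p a q)

/-- The sofic shift presented by `G`: labels of bi-infinite paths. -/
def shift (G : LabeledGraph V A) : Set (ℤ → A) :=
  { x | ∃ v : ℤ → V, ∀ j : ℤ, G.Edge (v j) (x j) (v (j + 1)) }

/-- `w` is a synchronizing word for `G`: `Q_G · w` is a singleton. -/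
def SyncWord (G : LabeledGraph V A) (w : List A) : Prop :=
  ∃ r, G.transSet Set.univ w = {r}

/-- A vertex `q` is synchronizing: some word synchronizes to `q`. -/
def SyncVertex (G : LabeledGraph V A) (q : V) : Prop :=
  ∃ w, G.transSet Set.univ w = {q}

/-- `G` is synchronizing: every vertex is synchronizing. -/
def Synchronizing (G : LabeledGraph V A) : Prop :=
  ∀ q, G.SyncVertex q

/-- `G` is follower-separated. -/
def FollowerSeparated (G : LabeledGraph V A) : Prop :=
  ∀ p q, G.follower p = G.follower q → p = q

/-- `G` is irreducible (strongly connected). -/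
def StronglyConnected (G : LabeledGraph V A) : Prop :=
  ∀ p q, ∃ w, G.Walk p w q

/-- `q` is reachable from `p`. -/
def Reachable (G : LabeledGraph V A) (p q : V) : Prop :=
  ∃ w, G.Walk p w q

/-- `C` is an irreducible component: an equivalence class of mutual reachability. -/
def IsIrredComponent (G : LabeledGraph V A) (C : Set V) : Prop :=
  ∃ p, C = { q | G.Reachable p q ∧ G.Reachable q p }

/-- `C` is terminal: everything reachable from `C` lies in `C`. -/
def TerminalSet (G : LabeledGraph V A) (C : Set V) : Prop :=
  ∀ p ∈ C, ∀ q, G.Reachable p q → q ∈ C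

/-- `C` is initial: everything that reaches `C` lies in `C`. -/
def InitialSet (G : LabeledGraph V A) (C : Set V) : Prop :=
  ∀ q ∈ C, ∀ p, G.Reachable p q → p ∈ C

/-- Subgraph induced by a set `P` of vertices. -/
def induce (G : LabeledGraph V A) (P : Set V) : LabeledGraph P A where
  Edge := fun p a q => G.Edge p.1 a q.1

/-- The graph `Ĝ`: vertices are ordered pairs of distinct vertices of `G`,
with an edge labeled `a` from `(p₁,p₂)` to `(q₁,q₂)` iff `G` has edges labeled
`a` from `p₁` to `q₁` and from `p₂` to `q₂`. -/
def pairGraph (G : LabeledGraph V A) : LabeledGraph { pq : V × V // pq.1 ≠ pq.2 } A where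
  Edge := fun x a y => G.Edge x.1.1 a y.1.1 ∧ G.Edge x.1.2 a y.1.2

end LabeledGraph

/-- The word `w` appears in the bi-infinite sequence `x`. -/
def AppearsIn {A : Type} (w : List A) (x : ℤ → A) : Prop :=
  ∃ i : ℤ, ∀ n : Fin w.length, x (i + (n : ℕ)) = w.get n

/-- The language of a subset of the full shift: all finite words appearing
in some point of `X`. -/
def lang {A : Type} (X : Set (ℤ → A)) : Set (List A) :=
  { w | ∃ x ∈ X, AppearsIn w x }

/-- `X` is a shift space. -/
def IsShiftSpace {A : Type} (X : Set (ℤ → A)) : Prop :=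
  ∃ F : Set (List A), X = { x | ∀ w ∈ F, ¬ AppearsIn w x }

/-- `X` is a shift of finite type. -/
def IsSFT {A : Type} (X : Set (ℤ → A)) : Prop :=
  ∃ F : Set (List A), F.Finite ∧ X = { x | ∀ w ∈ F, ¬ AppearsIn w x }

/-- `w` is intrinsically synchronizing for `X`. -/
def IntrinsicallySync {A : Type} (X : Set (ℤ → A)) (w : List A) : Prop :=
  w ∈ lang X ∧ ∀ u v, u ++ w ∈ lang X → w ++ v ∈ lang X → u ++ (w ++ v) ∈ lang X

/-- `X` is an irreducible shift space. -/
def IrreducibleShift {A : Type} (X : Set (ℤ → A)) : Prop :=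
  ∀ u ∈ lang X, ∀ v ∈ lang X, ∃ w, u ++ (w ++ v) ∈ lang X

/-- The follower set of a word `u` in `X`. -/
def followerX {A : Type} (X : Set (ℤ → A)) (u : List A) : Set (List A) :=
  { w | u ++ w ∈ lang X }

/-- `X` is `M`-step: every word of `B(X)` of length at least `M` is
intrinsically synchronizing for `X`. -/
def MStep {A : Type} (X : Set (ℤ → A)) (M : ℕ) : Prop :=
  ∀ w ∈ lang X, M ≤ w.length → IntrinsicallySync X w

/-- A deterministic finite automaton over state type `Q` and alphabet `A`. -/
structure DFA' (Q A : Type) where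
  step : Q → A → Q
  start : Q
  accept : Set Q

/-- Extended transition function. -/
def DFA'.evalFrom {Q A : Type} (M : DFA' Q A) (q : Q) (w : List A) : Q :=
  w.foldl M.step q

/-- The language of a DFA. -/
def DFA'.lang {Q A : Type} (M : DFA' Q A) : Set (List A) :=
  { w | M.evalFrom M.start w ∈ M.accept }

/-- Alphabet `Σ ∪ {◁, ▷, *, ℓ}`. -/
inductive Sym1 (A : Type) : Type
  | letter : A → Sym1 A
  | lm : Sym1 A    -- ◁
  | rm : Sym1 A    -- ▷
  | star : Sym1 A  -- *
  | ell : Sym1 A   -- ℓ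

/-- Vertices of the first reduction construction: the pre-initial states `p_i`,
the DFA states, and the two special states `p*` and `s*`. -/
inductive V1 {n : ℕ} (Q : Fin n → Type) : Type
  | pre : Fin n → V1 Q
  | st : (i : Fin n) → Q i → V1 Q
  | pstar : V1 Q
  | sstar : V1 Q

/-- Edges of the first reduction construction. -/
inductive Red1Edge {n : ℕ} {Q : Fin n → Type} {A : Type} (M : ∀ i, DFA' (Q i) A) :
    V1 Q → Sym1 A → V1 Q → Prop
  /-- self loop labeled `*` on `p_i` -/
  | preLoop (i : Fin n) : Red1Edge M (.pre i) .star (.pre i)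
  /-- the embedded DFA transitions -/
  | dfaStep (i : Fin n) (q : Q i) (a : A) :
      Red1Edge M (.st i q) (.letter a) (.st i ((M i).step q a))
  /-- edge labeled `◁` from `p_i` to `s_i` -/
  | enter (i : Fin n) : Red1Edge M (.pre i) .lm (.st i ((M i).start))
  /-- edge labeled `▷` from each accepting state to `p_1` -/
  | exitAcc (i : Fin n) (q : Q i) (j : Fin n) :
      q ∈ (M i).accept → (j : ℕ) = 0 → Red1Edge M (.st i q) .rm (.pre j)
  /-- edge labeled `ℓ` from each state of `M_i` to `s_i` -/
  | reset (i : Fin n) (q : Q i) : Red1Edge M (.st i q) .ell (.st i ((M i).start))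
  /-- self loop labeled `*` on `p*` -/
  | pstarLoop : Red1Edge M .pstar .star .pstar
  /-- edge labeled `◁` from `p*` to `s*` -/
  | pstarEnter : Red1Edge M .pstar .lm .sstar
  /-- edge labeled `▷` from `s*` to `p_1` -/
  | sstarExit (j : Fin n) : (j : ℕ) = 0 → Red1Edge M .sstar .rm (.pre j)
  /-- self loop labeled `a` on `s*` for each `a ∈ Σ` -/
  | sstarLoop (a : A) : Red1Edge M .sstar (.letter a) .sstar
  /-- edge labeled `ℓ` from `p_i` to `p_{i+1}` for `i = 1, …, n-1` -/
  | chain (i j : Fin n) : (j : ℕ) = (i : ℕ) + 1 → Red1Edge M (.pre i) .ell (.pre j)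
  /-- edge labeled `ℓ` from `p_n` to `s*` -/
  | lastChain (i : Fin n) : (i : ℕ) + 1 = n → Red1Edge M (.pre i) .ell .sstar

/-- The labeled graph `G` of the first reduction construction. -/
def Red1 {n : ℕ} {Q : Fin n → Type} {A : Type} (M : ∀ i, DFA' (Q i) A) :
    LabeledGraph (V1 Q) (Sym1 A) where
  Edge := Red1Edge M

/-
If every word is accepted by some `M_i`, deleting `p*` from `G` does not change the shift: a
bi-infinite path through `p*` reads `*^∞ ◁ w ▷ …` or `*^∞ ◁` followed by letters forever, and it
can be rerouted through `p_i` for an `i` with `w ∈ L(M_i)`, respectively through `p_1`. What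
remains is deterministic, and `▷` synchronizes it to `p_1`, from which every vertex is reachable.

Conversely, let `H` be a synchronizing presentation of `⟨G⟩` and `w` a word rejected by every
`M_i`. In `G` the word `* ◁ w ▷` can only be read from `p*`. If `s` synchronizes `H` to the start
of a path reading `* ◁ w ▷`, then `G` reads `s * ◁ w ▷`, so `s` is a power of `*`. Since `G` reads
`▷ s`, `H` reads `▷ s * ◁ w ▷`, hence so does `G`; but after `▷` the graph `G` is at `p_1`, which
forces `w ∈ L(M_1)`.
-/

theorem exists_seq_of_forall_exists {V : Type} {P : ℕ → V → Prop} {R : ℕ → V → V → Prop}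
    (h : ∀ t p, P t p → ∃ q, P (t + 1) q ∧ R t p q) {p : V} (hp : P 0 p) :
    ∃ f : ℕ → V, f 0 = p ∧ ∀ t, R t (f t) (f (t + 1)) := by
  choose! next hnext hR using h
  let f : ℕ → V := fun t => Nat.rec p (fun t q => next t q) t
  have hf : ∀ t, P t (f t) := fun t => by
    induction t with
    | zero => exact hp
    | succ t ih => exact hnext t _ ih
  exact ⟨f, rfl, fun t => hR t _ (hf t)⟩

namespace LabeledGraph

variable {V W A : Type} {G : LabeledGraph V A}

theorem Walk.append {p q r : V} {u u' : List A} (h : G.Walk p u q) (h' : G.Walk q u' r) :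
    G.Walk p (u ++ u') r := by
  induction u generalizing p with
  | nil => cases h; exact h'
  | cons a t ih =>
    obtain ⟨s, hs, hw⟩ := h
    exact ⟨s, hs, ih hw⟩

theorem walk_append_iff {p r : V} {u u' : List A} :
    G.Walk p (u ++ u') r ↔ ∃ q, G.Walk p u q ∧ G.Walk q u' r := by
  refine ⟨fun h => ?_, fun ⟨_, h, h'⟩ => h.append h'⟩
  induction u generalizing p with
  | nil => exact ⟨p, rfl, h⟩
  | cons a t ih =>
    obtain ⟨s, hs, hw⟩ := h
    obtain ⟨q, h1, h2⟩ := ih hw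
    exact ⟨q, ⟨s, hs, h1⟩, h2⟩

theorem walk_singleton {p q : V} {a : A} : G.Walk p [a] q ↔ G.Edge p a q :=
  ⟨fun ⟨_, h, hr⟩ => hr ▸ h, fun h => ⟨q, h, rfl⟩⟩

theorem Deterministic.walk_unique (hd : G.Deterministic) {p q q' : V} {u : List A}
    (h : G.Walk p u q) (h' : G.Walk p u q') : q = q' := by
  induction u generalizing p with
  | nil => exact h.symm.trans h'
  | cons a t ih =>
    obtain ⟨s, hs, hw⟩ := h
    obtain ⟨s', hs', hw'⟩ := h'
    cases hd _ _ _ _ hs hs'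
    exact ih hw hw'

theorem mem_transSet_univ {q : V} {u : List A} :
    q ∈ G.transSet Set.univ u ↔ ∃ p, G.Walk p u q := by
  simp [transSet]

/-- Backward rays of `G` are the forward rays of `G.reverse`. -/
def reverse (G : LabeledGraph V A) : LabeledGraph V A :=
  ⟨fun p a q => G.Edge q a p⟩

theorem walk_of_ray {f : ℕ → V} {x : ℕ → A} (hf : ∀ t, G.Edge (f t) (x t) (f (t + 1)))
    {u : List A} (hu : ∀ t (ht : t < u.length), x t = u[t]) :
    G.Walk (f 0) u (f u.length) := by
  induction u generalizing f x with
  | nil => rfl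
  | cons a u ih =>
    refine ⟨f 1, by simpa [hu 0 (by simp)] using hf 0, ?_⟩
    exact ih (f := fun t => f (t + 1)) (x := fun t => x (t + 1)) (fun t => hf (t + 1))
      (fun t ht => hu (t + 1) (by simpa using ht))

theorem exists_ray_of_walk {p q : V} {u : List A} (h : G.Walk p u q) {x : ℕ → A}
    (hu : ∀ t (ht : t < u.length), x t = u[t]) {f : ℕ → V} (hf0 : f 0 = q)
    (hf : ∀ t, G.Edge (f t) (x (u.length + t)) (f (t + 1))) :
    ∃ g : ℕ → V, g 0 = p ∧ ∀ t, G.Edge (g t) (x t) (g (t + 1)) := by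
  induction u generalizing p x with
  | nil => exact ⟨f, hf0.trans h.symm, fun t => by simpa using hf t⟩
  | cons a u ih =>
    obtain ⟨r, hr, hw⟩ := h
    obtain ⟨g, hg0, hg⟩ := ih hw (x := fun t => x (t + 1))
      (fun t ht => hu (t + 1) (by simpa using ht))
      (fun t => by simpa [Nat.add_right_comm] using hf t)
    refine ⟨fun t => Nat.casesOn t p g, rfl, ?_⟩
    rintro (_ | t)
    · simpa [hg0, hu 0 (by simp)] using hr
    · exact hg t

theorem exists_ray (hout : ∀ p, ∃ a q, G.Edge p a q) (p : V) :
    ∃ (f : ℕ → V) (x : ℕ → A), f 0 = p ∧ ∀ t, G.Edge (f t) (x t) (f (t + 1)) := by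
  obtain ⟨f, hf0, hf⟩ := exists_seq_of_forall_exists (P := fun _ _ => True)
    (R := fun _ p q => ∃ a, G.Edge p a q) (fun _ p _ => (hout p).elim fun a ⟨q, h⟩ =>
      ⟨q, trivial, a, h⟩) trivial
  choose x hx using hf
  exact ⟨f, x, hf0, hx⟩

theorem mem_shift_of_rays {x : ℤ → A} (k : ℤ) {f g : ℕ → V}
    (hf : ∀ t : ℕ, G.Edge (f t) (x (k + t)) (f (t + 1)))
    (hg : ∀ t : ℕ, G.Edge (g (t + 1)) (x (k - (t + 1))) (g t)) (h0 : f 0 = g 0) :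
    x ∈ G.shift := by
  refine ⟨fun j => if k ≤ j then f (j - k).toNat else g (k - j).toNat, fun j => ?_⟩
  rcases lt_trichotomy (j + 1) k with hj | hj | hj
  · have := hg (k - j - 1).toNat
    rw [show (((k - j - 1).toNat : ℕ) : ℤ) + 1 = k - j by omega, sub_sub_cancel,
      show (k - j - 1).toNat + 1 = (k - j).toNat by omega] at this
    simpa [show ¬ k ≤ j by omega, show ¬ k ≤ j + 1 by omega,
      show (k - (j + 1)).toNat = (k - j - 1).toNat by omega] using this
  · have := hg 0
    simp only [Nat.cast_zero, zero_add, ← h0] at this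
    simpa [show ¬ k ≤ j by omega, hj, show j = k - 1 by omega] using this
  · have := hf (j - k).toNat
    rw [show k + (((j - k).toNat : ℕ) : ℤ) = j by omega,
      show (j - k).toNat + 1 = (j + 1 - k).toNat by omega] at this
    simpa [show k ≤ j by omega, show k ≤ j + 1 by omega] using this

theorem mem_lang_shift_iff (hG : G.Essential) {u : List A} :
    u ∈ lang G.shift ↔ ∃ p q, G.Walk p u q := by
  constructor
  · rintro ⟨x, ⟨v, hv⟩, i, hi⟩
    refine ⟨v i, v (i + u.length), ?_⟩
    simpa using walk_of_ray (f := fun t : ℕ => v (i + t)) (x := fun t : ℕ => x (i + t))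
      (fun t => by simpa [add_assoc] using hv (i + t)) (fun t ht => hi ⟨t, ht⟩)
  · rintro ⟨p, q, h⟩
    obtain ⟨f, y, hf0, hf⟩ := exists_ray (fun p => (hG p).1) q
    obtain ⟨g, z, hg0, hg⟩ := exists_ray (G := G.reverse) (fun p => (hG p).2) p
    let X : ℕ → A := fun t => if ht : t < u.length then u[t] else y (t - u.length)
    let x : ℤ → A := fun j => if 0 ≤ j then X j.toNat else z (-j - 1).toNat
    obtain ⟨f', hf'0, hf'⟩ := exists_ray_of_walk h (x := X) (fun t ht => by simp [X, ht]) hf0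
      (fun t => by simpa [X] using hf t)
    refine ⟨x, mem_shift_of_rays 0 (f := f') (g := g) (fun t => by simpa [x] using hf' t)
      (fun t => ?_) (hf'0.trans hg0.symm), 0, fun t => by simp [x, X]⟩
    have hx : x (0 - (t + 1)) = z t := by
      simp only [x, if_neg (show ¬ (0 : ℤ) ≤ 0 - (t + 1) by omega)]
      congr; omega
    exact hx ▸ hg t

theorem Deterministic.synchronizing (hd : G.Deterministic) {r : V} (hr : G.SyncVertex r)
    (hreach : ∀ q, G.Reachable r q) : G.Synchronizing := by
  intro q
  obtain ⟨w, hw⟩ := hr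
  obtain ⟨u, hu⟩ := hreach q
  refine ⟨w ++ u, Set.eq_singleton_iff_unique_mem.2 ⟨?_, fun q' hq' => ?_⟩⟩
  · obtain ⟨p, hp⟩ := mem_transSet_univ.1 (hw ▸ Set.mem_singleton r)
    exact mem_transSet_univ.2 ⟨p, hp.append hu⟩
  · obtain ⟨p, hp⟩ := mem_transSet_univ.1 hq'
    obtain ⟨r', hr', hq'⟩ := walk_append_iff.1 hp
    have : r' = r := by simpa [hw] using mem_transSet_univ.2 ⟨p, hr'⟩
    exact hd.walk_unique (this ▸ hq') hu

theorem Deterministic.induce (hd : G.Deterministic) (S : Set V) :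
    (G.induce S).Deterministic :=
  fun _ _ _ _ h h' => Subtype.ext (hd _ _ _ _ h h')

theorem shift_induce_subset (S : Set V) : (G.induce S).shift ⊆ G.shift :=
  fun _ ⟨v, hv⟩ => ⟨fun j => v j, hv⟩

theorem walk_induce {S : Set V} (hS : ∀ p a q, p ∈ S → G.Edge p a q → q ∈ S) {p q : S}
    {u : List A} (h : G.Walk p u q) : (G.induce S).Walk p u q := by
  induction u generalizing p with
  | nil => exact Subtype.ext h
  | cons a u ih =>
    obtain ⟨r, hr, hw⟩ := h
    exact ⟨⟨r, hS _ _ _ p.2 hr⟩, hr, ih hw⟩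

def comap (G : LabeledGraph V A) (e : W ≃ V) : LabeledGraph W A :=
  ⟨fun p a q => G.Edge (e p) a (e q)⟩

variable (e : W ≃ V)

theorem walk_comap {p q : W} {u : List A} : (G.comap e).Walk p u q ↔ G.Walk (e p) u (e q) := by
  induction u generalizing p with
  | nil => exact e.apply_eq_iff_eq.symm
  | cons a u ih =>
    refine ⟨fun ⟨r, hr, hw⟩ => ⟨e r, hr, ih.1 hw⟩, fun ⟨r, hr, hw⟩ => ⟨e.symm r, ?_, ih.2 ?_⟩⟩
    · simpa [comap] using hr
    · simpa using hw

theorem Deterministic.comap (hd : G.Deterministic) : (G.comap e).Deterministic :=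
  fun _ _ _ _ h h' => e.injective (hd _ _ _ _ h h')

theorem Essential.comap (hG : G.Essential) : (G.comap e).Essential := by
  intro q
  obtain ⟨⟨a, r, hr⟩, ⟨b, p, hp⟩⟩ := hG (e q)
  exact ⟨⟨a, e.symm r, by simpa [LabeledGraph.comap] using hr⟩,
    ⟨b, e.symm p, by simpa [LabeledGraph.comap] using hp⟩⟩

theorem Synchronizing.comap (hG : G.Synchronizing) : (G.comap e).Synchronizing := by
  intro q
  obtain ⟨u, hu⟩ := hG (e q)
  refine ⟨u, Set.ext fun z => ?_⟩
  rw [mem_transSet_univ, Set.mem_singleton_iff, ← e.apply_eq_iff_eq, ← Set.mem_singleton_iff,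
    ← hu, mem_transSet_univ, e.surjective.exists]
  simp only [walk_comap]

theorem shift_comap : (G.comap e).shift = G.shift := by
  ext x
  refine ⟨fun ⟨v, hv⟩ => ⟨e ∘ v, hv⟩, fun ⟨v, hv⟩ => ⟨e.symm ∘ v, fun j => ?_⟩⟩
  simpa [LabeledGraph.comap] using hv j

theorem exists_fin_presentation [Finite V] (hd : G.Deterministic) (hG : G.Essential)
    (hs : G.Synchronizing) :
    ∃ (m : ℕ) (H : LabeledGraph (Fin m) A), H.Deterministic ∧ H.Essential ∧
      H.Synchronizing ∧ H.shift = G.shift := by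
  obtain ⟨m, ⟨e⟩⟩ := Finite.exists_equiv_fin V
  exact ⟨m, G.comap e.symm, hd.comap _, hG.comap _, hs.comap _, shift_comap _⟩

end LabeledGraph

instance V1.instFinite {n : ℕ} {Q : Fin n → Type} [∀ i, Finite (Q i)] : Finite (V1 Q) := by
  refine Finite.of_surjective (Sum.elim V1.pre (Sum.elim (fun x : Σ i, Q i => V1.st x.1 x.2)
    (fun b : Bool => cond b .pstar .sstar))) fun v => ?_
  cases v with
  | pre i => exact ⟨.inl i, rfl⟩
  | st i q => exact ⟨.inr (.inl ⟨i, q⟩), rfl⟩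
  | pstar => exact ⟨.inr (.inr true), rfl⟩
  | sstar => exact ⟨.inr (.inr false), rfl⟩

section Red1

open LabeledGraph

variable {n : ℕ} {Q : Fin n → Type} {A : Type} {M : ∀ i, DFA' (Q i) A}

theorem red1_deterministic : (Red1 M).Deterministic := by
  rintro p a q q' h h'
  cases h <;> cases h' <;> first
    | rfl
    | (exfalso; omega)
    | (congr 1; exact Fin.ext (by omega))

theorem red1_edge_star {p q : V1 Q} (h : (Red1 M).Edge p .star q) :
    q = p ∧ (p = .pstar ∨ ∃ i, p = .pre i) := by
  cases h with
  | preLoop i => exact ⟨rfl, .inr ⟨i, rfl⟩⟩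
  | pstarLoop => exact ⟨rfl, .inl rfl⟩

theorem red1_edge_rm (hn : 0 < n) {p q : V1 Q} (h : (Red1 M).Edge p .rm q) :
    q = .pre ⟨0, hn⟩ := by
  cases h with
  | exitAcc _ _ j _ hj => exact congrArg V1.pre (Fin.ext hj)
  | sstarExit j hj => exact congrArg V1.pre (Fin.ext hj)

theorem red1_edge_pre_lm {i : Fin n} {q : V1 Q} (h : (Red1 M).Edge (.pre i) .lm q) :
    q = .st i (M i).start := by
  cases h; rfl

theorem red1_edge_st_rm {i : Fin n} {q : Q i} {r : V1 Q} (h : (Red1 M).Edge (.st i q) .rm r) :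
    q ∈ (M i).accept := by
  cases h; assumption

theorem red1_edge_to_pstar {p : V1 Q} {a : Sym1 A} (h : (Red1 M).Edge p a .pstar) :
    p = .pstar ∧ a = .star := by
  cases h; exact ⟨rfl, rfl⟩

theorem red1_edge_from_pstar {q : V1 Q} {a : Sym1 A} (h : (Red1 M).Edge .pstar a q) :
    (q = .pstar ∧ a = .star) ∨ (q = .sstar ∧ a = .lm) := by
  cases h
  · exact .inl ⟨rfl, rfl⟩
  · exact .inr ⟨rfl, rfl⟩

theorem red1_edge_from_sstar {q : V1 Q} {a : Sym1 A} (h : (Red1 M).Edge .sstar a q) :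
    (q = .sstar ∧ ∃ b, a = .letter b) ∨ a = .rm := by
  cases h with
  | sstarExit => exact .inr rfl
  | sstarLoop b => exact .inl ⟨rfl, b, rfl⟩

theorem red1_walk_letters (i : Fin n) (q : Q i) (w : List A) :
    (Red1 M).Walk (.st i q) (w.map .letter) (.st i ((M i).evalFrom q w)) := by
  induction w generalizing q with
  | nil => rfl
  | cons a w ih => exact ⟨_, .dfaStep i q a, ih _⟩

theorem red1_walk_sstar_letters (w : List A) :
    (Red1 M).Walk .sstar (w.map .letter) .sstar := by
  induction w with
  | nil => rfl
  | cons a w ih => exact ⟨_, .sstarLoop a, ih⟩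

theorem red1_walk_pre_stars (i : Fin n) (k : ℕ) :
    (Red1 M).Walk (.pre i) (List.replicate k .star) (.pre i) := by
  induction k with
  | zero => rfl
  | succ k ih => exact ⟨_, .preLoop i, ih⟩

theorem red1_walk_stars {p q : V1 Q} {k : ℕ}
    (h : (Red1 M).Walk p (List.replicate k .star) q) : q = p := by
  induction k generalizing p with
  | zero => exact h.symm
  | succ k ih =>
    obtain ⟨r, hr, hw⟩ := h
    exact (ih hw).trans (red1_edge_star hr).1

theorem red1_walk_to_pstar {p : V1 Q} {u : List (Sym1 A)} (h : (Red1 M).Walk p u .pstar) :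
    p = .pstar ∧ u = List.replicate u.length .star := by
  induction u generalizing p with
  | nil => exact ⟨h, rfl⟩
  | cons a u ih =>
    obtain ⟨r, hr, hw⟩ := h
    obtain ⟨rfl, hu⟩ := ih hw
    obtain ⟨rfl, rfl⟩ := red1_edge_to_pstar hr
    exact ⟨rfl, by rw [List.length_cons, List.replicate_succ, ← hu]⟩

/-- The word `*^(k+1) ◁ w ▷`. -/
def probe (k : ℕ) (w : List A) : List (Sym1 A) :=
  List.replicate (k + 1) .star ++ .lm :: (w.map .letter ++ [.rm])

theorem red1_walk_probe {k : ℕ} {w : List A} {p r : V1 Q} (h : (Red1 M).Walk p (probe k w) r) :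
    p = .pstar ∨ ∃ i, p = .pre i ∧ w ∈ (M i).lang := by
  obtain ⟨p', hstars, s, hlm, hrest⟩ := walk_append_iff.1 h
  obtain rfl : p' = p := red1_walk_stars hstars
  obtain ⟨q, hw, hrm⟩ := walk_append_iff.1 hrest
  obtain ⟨r', hr', -⟩ := hstars
  rcases (red1_edge_star hr').2 with hp | ⟨i, rfl⟩
  · exact .inl hp
  · refine .inr ⟨i, rfl, ?_⟩
    rw [red1_edge_pre_lm hlm] at hw
    rw [red1_deterministic.walk_unique hw (red1_walk_letters i _ w)] at hrm
    exact red1_edge_st_rm (walk_singleton.1 hrm)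

theorem red1_walk_chain (k : ℕ) (hk : k < n) :
    (Red1 M).Walk (.pre ⟨0, by omega⟩) (List.replicate k .ell) (.pre ⟨k, hk⟩) := by
  induction k with
  | zero => rfl
  | succ k ih =>
    rw [List.replicate_succ']
    exact (ih (by omega)).append (walk_singleton.2 (.chain ⟨k, by omega⟩ ⟨k + 1, hk⟩ rfl))

theorem red1_reachable (hn : 0 < n)
    (hreach : ∀ i (q : Q i), ∃ w, (M i).evalFrom (M i).start w = q) (v : V1 Q)
    (hv : v ≠ .pstar) : (Red1 M).Reachable (.pre ⟨0, hn⟩) v := by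
  cases v with
  | pre j => exact ⟨_, red1_walk_chain j j.2⟩
  | st i q =>
    obtain ⟨w, rfl⟩ := hreach i q
    exact ⟨_, (red1_walk_chain i i.2).append
      (show (Red1 M).Walk (.pre i) (.lm :: w.map .letter) _ from
        ⟨_, .enter i, red1_walk_letters i _ w⟩)⟩
  | pstar => exact absurd rfl hv
  | sstar =>
    refine ⟨List.replicate (n - 1) .ell ++ [.ell], (red1_walk_chain (n - 1) (by omega)).append ?_⟩
    exact walk_singleton.2 (.lastChain _ (by simp; omega))

theorem red1_exists_edge_from (hn : 0 < n) (v : V1 Q) :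
    ∃ a q, q ≠ .pstar ∧ (Red1 M).Edge v a q := by
  cases v with
  | pre i => exact ⟨_, _, by simp, .preLoop i⟩
  | st i q => exact ⟨_, _, by simp, .reset i q⟩
  | pstar => exact ⟨_, _, by simp, .pstarEnter⟩
  | sstar => exact ⟨_, _, by simp, .sstarExit ⟨0, hn⟩ rfl⟩

theorem red1_exists_edge_to (hn : 0 < n)
    (hreach : ∀ i (q : Q i), ∃ w, (M i).evalFrom (M i).start w = q) (v : V1 Q)
    (hv : v ≠ .pstar) : ∃ a p, p ≠ .pstar ∧ (Red1 M).Edge p a v := by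
  cases v with
  | pre j =>
    rcases Nat.eq_zero_or_pos j with hj | hj
    · exact ⟨_, _, by simp, .sstarExit j hj⟩
    · exact ⟨_, _, by simp, .chain ⟨j - 1, by omega⟩ j (by simp; omega)⟩
  | st i q =>
    obtain ⟨w, rfl⟩ := hreach i q
    rcases List.eq_nil_or_concat w with rfl | ⟨u, a, rfl⟩
    · exact ⟨_, _, by simp, .reset i (M i).start⟩
    · refine ⟨.letter a, .st i ((M i).evalFrom (M i).start u), by simp, ?_⟩
      rw [show (M i).evalFrom (M i).start (u.concat a) = (M i).step ((M i).evalFrom (M i).start u) a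
        by simp [DFA'.evalFrom]]
      exact .dfaStep i _ a
  | pstar => exact absurd rfl hv
  | sstar => exact ⟨_, _, by simp, .lastChain ⟨n - 1, by omega⟩ (by simp; omega)⟩

theorem red1_essential (hn : 0 < n)
    (hreach : ∀ i (q : Q i), ∃ w, (M i).evalFrom (M i).start w = q) : (Red1 M).Essential := by
  intro v
  refine ⟨(red1_exists_edge_from hn v).imp fun a ⟨q, _, h⟩ => ⟨q, h⟩, ?_⟩
  by_cases hv : v = .pstar
  · exact hv ▸ ⟨_, _, .pstarLoop⟩
  · exact (red1_exists_edge_to hn hreach v hv).imp fun a ⟨p, _, h⟩ => ⟨p, h⟩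

def red1NoPstar (M : ∀ i, DFA' (Q i) A) : LabeledGraph {v : V1 Q | v ≠ .pstar} (Sym1 A) :=
  (Red1 M).induce {v | v ≠ .pstar}

theorem red1NoPstar_deterministic : (red1NoPstar M).Deterministic :=
  red1_deterministic.induce _

theorem red1NoPstar_essential (hn : 0 < n)
    (hreach : ∀ i (q : Q i), ∃ w, (M i).evalFrom (M i).start w = q) :
    (red1NoPstar M).Essential := by
  rintro ⟨v, hv⟩
  obtain ⟨a, q, hq, hout⟩ := red1_exists_edge_from hn v
  obtain ⟨b, p, hp, hin⟩ := red1_exists_edge_to hn hreach v hv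
  exact ⟨⟨a, ⟨q, hq⟩, hout⟩, ⟨b, ⟨p, hp⟩, hin⟩⟩

theorem red1_ne_pstar_of_edge {p q : V1 Q} {a : Sym1 A} (hp : p ≠ .pstar)
    (h : (Red1 M).Edge p a q) : q ≠ .pstar :=
  fun hq => hp (red1_edge_to_pstar (hq ▸ h)).1

theorem red1NoPstar_synchronizing (hn : 0 < n)
    (hreach : ∀ i (q : Q i), ∃ w, (M i).evalFrom (M i).start w = q) :
    (red1NoPstar M).Synchronizing := by
  refine red1NoPstar_deterministic.synchronizing (r := ⟨.pre ⟨0, hn⟩, by simp⟩)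
    ⟨[.rm], Set.ext fun q => ?_⟩ fun ⟨v, hv⟩ => ?_
  · simp only [mem_transSet_univ, walk_singleton, Set.mem_singleton_iff]
    refine ⟨fun ⟨p, hp⟩ => Subtype.ext (red1_edge_rm hn hp), ?_⟩
    rintro rfl
    exact ⟨⟨.sstar, by simp⟩, .sstarExit _ rfl⟩
  · obtain ⟨u, hu⟩ := red1_reachable hn hreach v hv
    exact ⟨u, walk_induce (fun _ _ _ => red1_ne_pstar_of_edge) hu⟩

theorem red1_walk_from_sstar (hn : 0 < n) {u : List (Sym1 A)} {r : V1 Q}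
    (h : (Red1 M).Walk .sstar u r) (hr : r ≠ .sstar) :
    ∃ (w : List A) (u' : List (Sym1 A)),
      u = w.map .letter ++ .rm :: u' ∧ (Red1 M).Walk (.pre ⟨0, hn⟩) u' r := by
  induction u with
  | nil => exact absurd h.symm hr
  | cons a u ih =>
    obtain ⟨q, hq, hw⟩ := h
    rcases red1_edge_from_sstar hq with ⟨rfl, b, rfl⟩ | rfl
    · obtain ⟨w, u', rfl, hw'⟩ := ih hw
      exact ⟨b :: w, u', rfl, hw'⟩
    · exact ⟨[], u, rfl, red1_edge_rm hn hq ▸ hw⟩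

/-- A walk through `p*` and `s*` reads `*^k ◁ w ▷ u'`; it can instead pass through `M_i` for
any `i` with `w ∈ L(M_i)`. -/
theorem red1_walk_reroute (hn : 0 < n) (hU : ∀ w, ∃ i, w ∈ (M i).lang) {u : List (Sym1 A)}
    {r : V1 Q} (h : (Red1 M).Walk .pstar u r) (hr : r ≠ .pstar) (hr' : r ≠ .sstar) :
    ∃ i, (Red1 M).Walk (.pre i) u r := by
  induction u with
  | nil => exact absurd h.symm hr
  | cons a u ih =>
    obtain ⟨q, hq, hw⟩ := h
    rcases red1_edge_from_pstar hq with ⟨rfl, rfl⟩ | ⟨rfl, rfl⟩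
    · obtain ⟨i, hi⟩ := ih hw
      exact ⟨i, _, .preLoop i, hi⟩
    · obtain ⟨w, u', rfl, hw'⟩ := red1_walk_from_sstar hn hw hr'
      obtain ⟨i, hi⟩ := hU w
      exact ⟨i, _, .enter i, (red1_walk_letters i _ w).append ⟨_, .exitAcc i _ ⟨0, hn⟩ hi rfl, hw'⟩⟩

/-- If the ray eventually leaves `p*` and `s*`, reroute its initial walk; otherwise it reads
`*^k ◁` followed by letters only, which a run of `M_1` reads as well. -/
theorem red1_ray_reroute (hn : 0 < n) (hU : ∀ w, ∃ i, w ∈ (M i).lang) {F : ℕ → V1 Q}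
    {X : ℕ → Sym1 A} (hF : ∀ t, (Red1 M).Edge (F t) (X t) (F (t + 1))) (hF0 : F 0 = .pstar) :
    ∃ i, ∃ g : ℕ → V1 Q, g 0 = .pre i ∧ ∀ t, (Red1 M).Edge (g t) (X t) (g (t + 1)) := by
  by_cases hl : ∃ l, F l ≠ .pstar ∧ F l ≠ .sstar
  · obtain ⟨l, hl, hl'⟩ := hl
    have hwalk := walk_of_ray hF (u := List.ofFn fun t : Fin l => X t) (by simp)
    rw [hF0, List.length_ofFn] at hwalk
    obtain ⟨i, hi⟩ := red1_walk_reroute hn hU hwalk hl hl'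
    exact ⟨i, exists_ray_of_walk hi (by simp) (f := fun t => F (l + t)) (by simp)
      (fun t => by simpa [Nat.add_assoc] using hF (l + t))⟩
  push Not at hl
  let i₀ : Fin n := ⟨0, hn⟩
  refine ⟨i₀, exists_seq_of_forall_exists
    (P := fun t (p : V1 Q) => (F t = .pstar ∧ p = .pre i₀) ∨ (F t = .sstar ∧ ∃ q, p = .st i₀ q))
    (R := fun t p q => (Red1 M).Edge p (X t) q)
    (fun t p hp => ?_) (.inl ⟨hF0, rfl⟩)⟩
  have he := hF t
  rcases hp with ⟨hFt, rfl⟩ | ⟨hFt, q, rfl⟩ <;> rw [hFt] at he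
  · rcases red1_edge_from_pstar he with ⟨h1, h2⟩ | ⟨h1, h2⟩
    · exact ⟨_, .inl ⟨h1, rfl⟩, h2 ▸ .preLoop i₀⟩
    · exact ⟨.st i₀ (M i₀).start, .inr ⟨h1, _, rfl⟩, h2 ▸ .enter i₀⟩
  · rcases red1_edge_from_sstar he with ⟨h1, b, h2⟩ | h2
    · exact ⟨.st i₀ ((M i₀).step q b), .inr ⟨h1, _, rfl⟩, h2 ▸ .dfaStep i₀ q b⟩
    · have h1 := red1_edge_rm hn (h2 ▸ he)
      exact absurd (hl (t + 1) (by simp [h1])) (by simp [h1])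

theorem red1_shift_subset_red1NoPstar (hn : 0 < n) (hU : ∀ w, ∃ i, w ∈ (M i).lang) :
    (Red1 M).shift ⊆ (red1NoPstar M).shift := by
  rintro x ⟨v, hv⟩
  by_cases h : ∃ k, v k = .pstar
  swap
  · push Not at h
    exact ⟨fun j => ⟨v j, h j⟩, hv⟩
  obtain ⟨k, hk⟩ := h
  have hpstar : ∀ t : ℕ, v (k - t) = .pstar := by
    intro t
    induction t with
    | zero => simpa using hk
    | succ t ih =>
      have := hv (k - (t + 1 : ℕ))
      rw [show k - ((t + 1 : ℕ) : ℤ) + 1 = k - t by push_cast; ring, ih] at this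
      exact (red1_edge_to_pstar this).1
  have hstar : ∀ t : ℕ, x (k - (t + 1)) = .star := fun t => by
    have := hv (k - (t + 1))
    rw [show k - ((t : ℤ) + 1) + 1 = k - t by ring, hpstar] at this
    exact (red1_edge_to_pstar this).2
  obtain ⟨i, g, hg0, hg⟩ := red1_ray_reroute hn hU (F := fun t => v (k + t))
    (X := fun t => x (k + t)) (fun t => by simpa [add_assoc] using hv (k + t)) (by simpa using hk)
  have hgne : ∀ t, g t ≠ .pstar := by
    intro t
    induction t with
    | zero => simp [hg0]
    | succ t ih => exact red1_ne_pstar_of_edge ih (hg t)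
  refine mem_shift_of_rays (G := red1NoPstar M) k (f := fun t => ⟨g t, hgne t⟩)
    (g := fun _ => ⟨.pre i, by simp⟩) hg (fun t => ?_) (Subtype.ext hg0)
  exact hstar t ▸ .preLoop i

theorem red1_exists_mem_lang_of_presentation (hn : 0 < n)
    (hreach : ∀ i (q : Q i), ∃ w, (M i).evalFrom (M i).start w = q) {W : Type}
    {H : LabeledGraph W (Sym1 A)} (hH : H.Essential) (hs : H.Synchronizing)
    (hshift : H.shift = (Red1 M).shift) (w : List A) : ∃ i, w ∈ (M i).lang := by
  by_contra! hw
  have hGH : ∀ u, (∃ p q, (Red1 M).Walk p u q) → ∃ p q, H.Walk p u q := fun u hu =>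
    (mem_lang_shift_iff hH).1 (hshift ▸ (mem_lang_shift_iff (red1_essential hn hreach)).2 hu)
  have hHG : ∀ u, (∃ p q, H.Walk p u q) → ∃ p q, (Red1 M).Walk p u q := fun u hu =>
    (mem_lang_shift_iff (red1_essential hn hreach)).1 (hshift ▸ (mem_lang_shift_iff hH).2 hu)
  obtain ⟨r₀, _, hr₀⟩ := hGH (probe 0 w) ⟨.pstar, .pre ⟨0, hn⟩, ⟨_, .pstarLoop, _, .pstarEnter,
    (red1_walk_sstar_letters w).append (walk_singleton.2 (.sstarExit _ rfl))⟩⟩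
  obtain ⟨s, hs₀⟩ := hs r₀
  have hsync : ∀ p r, H.Walk p s r → r = r₀ := fun p r h => by
    simpa [hs₀] using mem_transSet_univ.2 ⟨p, h⟩
  obtain ⟨p, hp⟩ := mem_transSet_univ.1 (hs₀ ▸ Set.mem_singleton r₀)
  -- In `G`, the word `s` must lead to `p*`, so it consists of stars.
  obtain ⟨_, _, hG⟩ := hHG (s ++ probe 0 w) ⟨p, _, hp.append hr₀⟩
  obtain ⟨P, hsP, hP⟩ := walk_append_iff.1 hG
  obtain rfl : P = .pstar := (red1_walk_probe hP).resolve_right fun ⟨i, _, hi⟩ => hw i hi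
  have hs_stars := (red1_walk_to_pstar hsP).2
  obtain ⟨p₁, _, r₁, hrm, hr₁⟩ := hGH (.rm :: s)
    ⟨.sstar, .pre ⟨0, hn⟩, _, .sstarExit _ rfl, hs_stars ▸ red1_walk_pre_stars _ _⟩
  obtain ⟨_, _, q, hq, hG'⟩ := hHG (.rm :: (s ++ probe 0 w))
    ⟨p₁, _, r₁, hrm, (hsync _ _ hr₁ ▸ hr₁).append hr₀⟩
  rw [red1_edge_rm hn hq, hs_stars, probe, ← List.append_assoc, ← List.replicate_add] at hG'
  obtain ⟨i, -, hi⟩ := (red1_walk_probe hG').resolve_left (by simp)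
  exact hw i hi

end Red1

theorem stmt12_general {n : ℕ} {Q : Fin n → Type} {A : Type}
    [∀ i, Fintype (Q i)] (hn : 0 < n)
    (M : ∀ i, DFA' (Q i) A)
    (hreach : ∀ i (q : Q i), ∃ w, (M i).evalFrom (M i).start w = q) :
    (⋃ i, (M i).lang) = Set.univ ↔
      ∃ (m : ℕ) (H : LabeledGraph (Fin m) (Sym1 A)),
        H.Deterministic ∧ H.Essential ∧ H.Synchronizing ∧
        H.shift = (Red1 M).shift := by
  constructor
  · intro hU
    have hU' : ∀ w, ∃ i, w ∈ (M i).lang := fun w => Set.mem_iUnion.1 (hU ▸ Set.mem_univ w)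
    obtain ⟨m, H, hd, he, hs, hH⟩ := LabeledGraph.exists_fin_presentation
      red1NoPstar_deterministic (red1NoPstar_essential hn hreach)
      (red1NoPstar_synchronizing (M := M) hn hreach)
    exact ⟨m, H, hd, he, hs, hH.trans
      ((LabeledGraph.shift_induce_subset _).antisymm (red1_shift_subset_red1NoPstar hn hU'))⟩
  · rintro ⟨m, H, -, he, hs, hH⟩
    exact Set.eq_univ_of_forall fun w =>
      Set.mem_iUnion.2 (red1_exists_mem_lang_of_presentation hn hreach he hs hH w)

/-- Let `M_1, …, M_n` be DFAs over a common alphabet `Σ`, each with nonempty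
accepting set and all states reachable from the initial state, and let `G` be
the graph of the first reduction construction. Then `⋃ᵢ L(Mᵢ) = Σ*` iff `⟨G⟩`
has a synchronizing deterministic presentation. -/
theorem stmt12 {n : ℕ} {Q : Fin n → Type} {A : Type}
    [Fintype A] [∀ i, Fintype (Q i)] (hn : 0 < n)
    (M : ∀ i, DFA' (Q i) A)
    (hacc : ∀ i, ((M i).accept).Nonempty)
    (hreach : ∀ i (q : Q i), ∃ w, (M i).evalFrom (M i).start w = q) :
    (⋃ i, (M i).lang) = Set.univ ↔
      ∃ (m : ℕ) (H : LabeledGraph (Fin m) (Sym1 A)),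
        H.Deterministic ∧ H.Essential ∧ H.Synchronizing ∧
        H.shift = (Red1 M).shift :=
  stmt12_general hn M hreach
end

section
/- Let M_1, …, M_n be DFAs over a common alphabet Σ, and let G and H be the labeled graphs obtained from the second reduction construction applied to M_1, …, M_n. Then ⋃_{i=1}^n L(M_i) = Σ* if and only if ⟨H⟩ ⊆ ⟨G⟩. -/
/-- Alphabet `Σ ∪ {◁, ▷, ℓ, ⋆}`. -/
inductive SymB (A : Type) : Type
  | letter : A → SymB A
  | lm : SymB A    -- ◁
  | rm : SymB A    -- ▷
  | ell : SymB A   -- ℓ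
  | star : SymB A  -- ⋆

/-- Vertices of the second reduction construction: the terminal state `t`,
the special state `s*`, and the DFA states. -/
inductive V2 {n : ℕ} (Q : Fin n → Type) : Type
  | t : V2 Q
  | sstar : V2 Q
  | st : (i : Fin n) → Q i → V2 Q

/-- Edges of the second reduction construction. -/
inductive Red2Edge {n : ℕ} {Q : Fin n → Type} {A : Type} (M : ∀ i, DFA' (Q i) A) :
    V2 Q → SymB A → V2 Q → Prop
  /-- self loop labeled `⋆` on `t` -/
  | tLoop : Red2Edge M .t .star .t
  /-- self loop labeled `a` on `s*` for each `a ∈ Σ` -/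
  | sstarLetter (a : A) : Red2Edge M .sstar (.letter a) .sstar
  /-- self loop labeled `ℓ` on `s*` -/
  | sstarEll : Red2Edge M .sstar .ell .sstar
  /-- edge labeled `▷` from `s*` to `t` -/
  | sstarExit : Red2Edge M .sstar .rm .t
  /-- the embedded DFA transitions -/
  | dfaStep (i : Fin n) (q : Q i) (a : A) :
      Red2Edge M (.st i q) (.letter a) (.st i ((M i).step q a))
  /-- edge labeled `◁` from each state of `M_i` to `s_i` -/
  | back (i : Fin n) (q : Q i) : Red2Edge M (.st i q) .lm (.st i ((M i).start))
  /-- edge labeled `▷` from each accepting state of `M_i` to `t` -/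
  | exitAcc (i : Fin n) (q : Q i) :
      q ∈ (M i).accept → Red2Edge M (.st i q) .rm .t
  /-- self loop labeled `ℓ` on each DFA state -/
  | ellLoop (i : Fin n) (q : Q i) : Red2Edge M (.st i q) .ell (.st i q)

/-- The labeled graph `G` of the second reduction construction. -/
def Red2 {n : ℕ} {Q : Fin n → Type} {A : Type} (M : ∀ i, DFA' (Q i) A) :
    LabeledGraph (V2 Q) (SymB A) where
  Edge := Red2Edge M

/-- The two-vertex graph `H` (vertices `false = q₁` and `true = q₂`):
self loops on `q₁` labeled `◁`, `ℓ`, and each `a ∈ Σ`; an edge labeled `▷`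
from `q₁` to `q₂`; and a self loop labeled `⋆` on `q₂`. -/
def H2 (A : Type) : LabeledGraph Bool (SymB A) where
  Edge := fun x c y =>
    (x = false ∧ y = false ∧ (c = .lm ∨ c = .ell ∨ ∃ a, c = .letter a)) ∨
    (x = false ∧ y = true ∧ c = .rm) ∨
    (x = true ∧ y = true ∧ c = .star)


section Aux
open Filter
variable {C S : Type}

def segA (x : ℤ → C) (a b : ℤ) : List C :=
  (List.range (b - a).toNat).map (fun k => x (a + (k : ℤ)))

lemma segA_self (x : ℤ → C) (a : ℤ) : segA x a a = [] := by simp [segA]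

lemma segA_succ (x : ℤ → C) {a b : ℤ} (h : a ≤ b) :
    segA x a (b + 1) = segA x a b ++ [x b] := by
  have h1 : (b + 1 - a).toNat = (b - a).toNat + 1 := by omega
  have h2 : a + (((b - a).toNat : ℕ) : ℤ) = b := by omega
  simp [segA, h1, List.range_succ, h2]
  congr 1
  omega

lemma exists_biinf [Finite S] (s0 : S) (step : S → C → S) (x : ℤ → C) :
    ∃ u : ℤ → S, ∀ j, u (j + 1) = step (u j) (x j) := by
  classical
  set g : ℕ → ℤ → S := fun m j => (segA x (-(m : ℤ)) j).foldl step s0 with hg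
  have hgstep : ∀ (m : ℕ) (j : ℤ), -(m : ℤ) ≤ j → g m (j + 1) = step (g m j) (x j) := by
    intro m j hj
    simp only [hg]
    rw [segA_succ x hj, List.foldl_append]
    rfl
  set U : Ultrafilter ℕ := Ultrafilter.of Filter.atTop with hUdef
  have hUtop : ∀ k : ℕ, {m | k ≤ m} ∈ U := fun k =>
    Ultrafilter.of_le Filter.atTop (Filter.mem_atTop k)
  have hex : ∀ j : ℤ, ∃ s : S, {m | g m j = s} ∈ U := by
    intro j
    by_contra hcon
    push_neg at hcon
    have h1 : ∀ s : S, {m | g m j = s}ᶜ ∈ U := fun s =>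
      (Ultrafilter.compl_mem_iff_notMem).2 (hcon s)
    have h2 : (⋂ s : S, {m | g m j = s}ᶜ) ∈ U := (Filter.iInter_mem).2 h1
    have h3 : (⋂ s : S, {m | g m j = s}ᶜ) = ∅ := by
      ext m
      simp only [Set.mem_iInter, Set.mem_compl_iff, Set.mem_setOf_eq, Set.mem_empty_iff_false,
        iff_false, not_forall, not_not]
      exact ⟨g m j, rfl⟩
    rw [h3] at h2
    exact Filter.empty_notMem (U : Filter ℕ) h2
  choose u hu using hex
  refine ⟨u, fun j => ?_⟩
  have h4 : ({m | g m j = u j} ∩ ({m | g m (j+1) = u (j+1)} ∩ {m : ℕ | j.natAbs + 1 ≤ m})) ∈ U :=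
    Filter.inter_mem (hu j) (Filter.inter_mem (hu (j+1)) (hUtop _))
  obtain ⟨m, hm1, hm2, hm3⟩ := Filter.nonempty_of_mem h4
  simp only [Set.mem_setOf_eq] at hm1 hm2 hm3
  have hmj : -(m : ℤ) ≤ j := by omega
  rw [← hm2, ← hm1, hgstep m j hmj]

end Aux

section Inv
variable {n : ℕ} {Q : Fin n → Type} {A : Type} {M : ∀ i, DFA' (Q i) A}

lemma edge_rm_cases {p r : V2 Q} (h : Red2Edge M p SymB.rm r) :
    (p = V2.sstar ∧ r = V2.t) ∨ ∃ i q, p = V2.st i q ∧ q ∈ (M i).accept ∧ r = V2.t := by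
  cases h
  · exact Or.inl ⟨rfl, rfl⟩
  · exact Or.inr ⟨_, _, rfl, ‹_›, rfl⟩

lemma edge_into_sstar {p : V2 Q} {c : SymB A} (h : Red2Edge M p c V2.sstar) : p = V2.sstar := by
  cases h <;> rfl

lemma edge_lm_not_sstar {p : V2 Q} (h : Red2Edge M p SymB.lm V2.sstar) : False := by
  cases h

lemma edge_into_st {p : V2 Q} {c : SymB A} {i : Fin n} {r : Q i}
    (h : Red2Edge M p c (V2.st i r)) : ∃ q', p = V2.st i q' := by
  cases h <;> exact ⟨_, rfl⟩

lemma edge_lm_into_st {p : V2 Q} {i : Fin n} {r : Q i}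
    (h : Red2Edge M p SymB.lm (V2.st i r)) : r = (M i).start := by
  cases h; rfl

lemma edge_letter_from_st {i : Fin n} {q : Q i} {a : A} {r : V2 Q}
    (h : Red2Edge M (V2.st i q) (SymB.letter a) r) : r = V2.st i ((M i).step q a) := by
  cases h; rfl

/-- deterministic step within component `i`, for the forward direction -/
def stepC (i : Fin n) (M : ∀ i, DFA' (Q i) A) (q : Q i) : SymB A → Q i
  | .letter a => (M i).step q a
  | .lm => (M i).start
  | _ => q

lemma edge_stepC {i : Fin n} (q : Q i) {c : SymB A}
    (hc : c = SymB.lm ∨ c = SymB.ell ∨ ∃ a, c = SymB.letter a) :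
    Red2Edge M (V2.st i q) c (V2.st i (stepC i M q c)) := by
  rcases hc with rfl | rfl | ⟨a, rfl⟩
  · exact Red2Edge.back i q
  · exact Red2Edge.ellLoop i q
  · exact Red2Edge.dfaStep i q a

lemma evalFrom_concat {S : Type} (N : DFA' S A) (q : S) (l : List A) (a : A) :
    N.evalFrom q (l ++ [a]) = N.step (N.evalFrom q l) a := by
  simp [DFA'.evalFrom]

def lettersOf {A : Type} : List (SymB A) → List A :=
  List.filterMap (fun c => match c with | .letter a => some a | _ => none)

lemma lettersOf_nil {A : Type} : lettersOf ([] : List (SymB A)) = [] := rfl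

lemma lettersOf_concat_ell {A : Type} (l : List (SymB A)) :
    lettersOf (l ++ [SymB.ell]) = lettersOf l := by
  simp [lettersOf]

lemma lettersOf_concat_letter {A : Type} (l : List (SymB A)) (a : A) :
    lettersOf (l ++ [SymB.letter a]) = lettersOf l ++ [a] := by
  simp [lettersOf]

end Inv

/-- Let `M_1, …, M_n` be DFAs over a common alphabet `Σ`, and let `G` and `H`
be the graphs of the second reduction construction. Then `⋃ᵢ L(Mᵢ) = Σ*` iff
`⟨H⟩ ⊆ ⟨G⟩`. -/
theorem stmt13 {n : ℕ} {Q : Fin n → Type} {A : Type}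
    [Fintype A] [∀ i, Fintype (Q i)] (hn : 0 < n)
    (M : ∀ i, DFA' (Q i) A) :
    (⋃ i, (M i).lang) = Set.univ ↔ (H2 A).shift ⊆ (Red2 M).shift := by
  classical
  constructor
  · intro hU x hx
    obtain ⟨vH, hvH⟩ := hx
    have hpropN : ∀ j : ℤ, vH j = true → ∀ m : ℕ, vH (j + (m:ℤ)) = true := by
      intro j hj m
      induction m with
      | zero => simpa using hj
      | succ m ih =>
        rcases hvH (j + (m:ℤ)) with ⟨h1,_,_⟩|⟨h1,_,_⟩|⟨_,h2,_⟩
        · rw [ih] at h1; cases h1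
        · rw [ih] at h1; cases h1
        · rw [show ((m+1:ℕ):ℤ) = (m:ℤ)+1 by push_cast; ring,
            show j + ((m:ℤ)+1) = (j + (m:ℤ)) + 1 by ring]
          exact h2
    have hprop : ∀ j : ℤ, vH j = true → ∀ k, j ≤ k → vH k = true := by
      intro j hj k hk
      have := hpropN j hj (k - j).toNat
      rwa [show j + (((k-j).toNat:ℕ) : ℤ) = k by omega] at this
    have hstar : ∀ j : ℤ, vH j = true → x j = SymB.star := by
      intro j hj
      rcases hvH j with ⟨h1,_,_⟩|⟨h1,_,_⟩|⟨_,_,h3⟩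
      · rw [hj] at h1; cases h1
      · rw [hj] at h1; cases h1
      · exact h3
    have hgood : ∀ j : ℤ, vH j = false → vH (j+1) = false →
        (x j = SymB.lm ∨ x j = SymB.ell ∨ ∃ a, x j = SymB.letter a) := by
      intro j h1 h2
      rcases hvH j with ⟨_,_,h3⟩|⟨_,h3,_⟩|⟨h3,_,_⟩
      · exact h3
      · rw [h2] at h3; cases h3
      · rw [h1] at h3; cases h3
    have hrmx : ∀ j : ℤ, vH j = false → vH (j+1) = true → x j = SymB.rm := by
      intro j h1 h2
      rcases hvH j with ⟨_,h3,_⟩|⟨_,_,h3⟩|⟨h3,_,_⟩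
      · rw [h2] at h3; cases h3
      · exact h3
      · rw [h1] at h3; cases h3
    by_cases hall : ∀ j : ℤ, vH j = true
    · exact ⟨fun _ => V2.t, fun j => by
        rw [hstar j (hall j)]; exact Red2Edge.tLoop⟩
    push_neg at hall
    obtain ⟨jb, hjb⟩ := hall
    have hjbf : vH jb = false := by
      cases h : vH jb
      · rfl
      · exact absurd h hjb
    by_cases hnof : ∀ j : ℤ, vH j = false
    · -- all false: realize in component 0
      obtain ⟨u, hu⟩ := exists_biinf ((M ⟨0,hn⟩).start) (stepC ⟨0,hn⟩ M) x
      refine ⟨fun j => V2.st ⟨0,hn⟩ (u j), fun j => ?_⟩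
      show Red2Edge M (V2.st ⟨0,hn⟩ (u j)) (x j) (V2.st ⟨0,hn⟩ (u (j+1)))
      rw [hu j]; exact edge_stepC _ (hgood j (hnof j) (hnof (j+1)))
    push_neg at hnof
    obtain ⟨ja, hja'⟩ := hnof
    have hja : vH ja = true := by
      cases h : vH ja
      · exact absurd h hja'
      · rfl
    have hle : jb ≤ ja := by
      by_contra h
      have := hprop ja hja jb (by omega)
      rw [this] at hjbf; cases hjbf
    have hP : ∃ k : ℕ, vH (jb + (k:ℤ)) = true := by
      refine ⟨(ja - jb).toNat, ?_⟩
      have : jb + ((ja - jb).toNat : ℤ) = ja := by omega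
      rw [this]; exact hja
    set k0 := Nat.find hP with hk0def
    have hk0 : vH (jb + (k0:ℤ)) = true := Nat.find_spec hP
    have hk0pos : 0 < k0 := by
      rcases Nat.eq_zero_or_pos k0 with h | h
      · rw [h] at hk0; simp only [Nat.cast_zero, add_zero] at hk0
        rw [hk0] at hjbf; cases hjbf
      · exact h
    set j0 : ℤ := jb + (k0:ℤ) - 1 with hj0def
    have hj0f : vH j0 = false := by
      have hmin := Nat.find_min hP (show k0 - 1 < k0 by omega)
      have he : jb + ((k0 - 1 : ℕ) : ℤ) = j0 := by
        push_cast [Nat.cast_sub (by omega : 1 ≤ k0)]; omega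
      rw [he] at hmin
      cases h : vH j0
      · rfl
      · exact absurd h hmin
    have hj0t : vH (j0 + 1) = true := by
      have : j0 + 1 = jb + (k0:ℤ) := by omega
      rw [this]; exact hk0
    have hx0 : x j0 = SymB.rm := hrmx j0 hj0f hj0t
    have htrue : ∀ j : ℤ, j0 < j → vH j = true := fun j hj =>
      hprop (j0+1) hj0t j (by omega)
    have hfalse : ∀ j : ℤ, j ≤ j0 → vH j = false := by
      intro j hj
      cases h : vH j
      · rfl
      · have := hprop j h j0 hj
        rw [this] at hj0f; cases hj0f
    have hgood' : ∀ j : ℤ, j < j0 →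
        (x j = SymB.lm ∨ x j = SymB.ell ∨ ∃ a, x j = SymB.letter a) :=
      fun j hj => hgood j (hfalse j (by omega)) (hfalse (j+1) (by omega))
    by_cases hlm : ∃ j : ℤ, j < j0 ∧ x j = SymB.lm
    · -- there is a ◁ before the ▷ : use a DFA component
      obtain ⟨j1, ⟨hj1lt, hj1lm⟩, hj1max⟩ :=
        Int.exists_greatest_of_bdd (P := fun j => j < j0 ∧ x j = SymB.lm)
          ⟨j0, fun z hz => hz.1.le⟩ hlm
      set w : List A := lettersOf (segA x (j1+1) j0) with hwdef
      have hwU : w ∈ ⋃ i, (M i).lang := by rw [hU]; trivial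
      obtain ⟨i, hwi⟩ := Set.mem_iUnion.1 hwU
      obtain ⟨u, hu⟩ := exists_biinf ((M i).start) (stepC i M) x
      have hu1 : u (j1 + 1) = (M i).start := by
        rw [hu j1, hj1lm]; rfl
      have hclaim : ∀ k : ℕ, j1 + 1 + (k:ℤ) ≤ j0 →
          u (j1 + 1 + (k:ℤ)) = (M i).evalFrom (M i).start (lettersOf (segA x (j1+1) (j1+1+(k:ℤ)))) := by
        intro k
        induction k with
        | zero =>
          intro _
          simp only [Nat.cast_zero, add_zero]
          rw [segA_self, lettersOf_nil]
          exact hu1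
        | succ k ih =>
          intro hk
          push_cast at hk ⊢
          set j : ℤ := j1 + 1 + (k:ℤ) with hjdef
          have h1 : j1 + 1 + ((k:ℤ) + 1) = j + 1 := by omega
          rw [h1, hu j, ih (by omega)]
          have hseg : segA x (j1+1) (j+1) = segA x (j1+1) j ++ [x j] :=
            segA_succ x (by omega)
          have hxj : x j = SymB.ell ∨ ∃ a, x j = SymB.letter a := by
            rcases hgood' j (by omega) with h | h | h
            · exact absurd (hj1max j ⟨by omega, h⟩) (by omega)
            · exact Or.inl h
            · exact Or.inr h
          rcases hxj with h | ⟨a, h⟩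
          · rw [hseg, h, lettersOf_concat_ell]; rfl
          · rw [hseg, h, lettersOf_concat_letter, evalFrom_concat]; rfl
      have hacc : u j0 = (M i).evalFrom (M i).start w := by
        have he : j1 + 1 + ((j0 - (j1+1)).toNat : ℤ) = j0 := by omega
        have := hclaim (j0 - (j1+1)).toNat (by omega)
        rw [he] at this
        exact this
      refine ⟨fun j => if j ≤ j0 then V2.st i (u j) else V2.t, fun j => ?_⟩
      show Red2Edge M (if j ≤ j0 then V2.st i (u j) else V2.t) (x j)
        (if j + 1 ≤ j0 then V2.st i (u (j+1)) else V2.t)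
      rcases lt_trichotomy j j0 with h | h | h
      · rw [if_pos h.le, if_pos (show j + 1 ≤ j0 by omega), hu j]
        exact edge_stepC _ (hgood' j h)
      · subst h
        rw [if_pos (le_refl j0), if_neg (show ¬ j0 + 1 ≤ j0 by omega), hx0, hacc]
        exact Red2Edge.exitAcc i _ hwi
      · rw [if_neg (show ¬ j ≤ j0 by omega), if_neg (show ¬ j + 1 ≤ j0 by omega),
          hstar j (htrue j h)]
        exact Red2Edge.tLoop
    · -- no ◁ before the ▷ : use s*
      push_neg at hlm
      refine ⟨fun j => if j ≤ j0 then V2.sstar else V2.t, fun j => ?_⟩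
      show Red2Edge M (if j ≤ j0 then V2.sstar else V2.t) (x j)
        (if j + 1 ≤ j0 then V2.sstar else V2.t)
      rcases lt_trichotomy j j0 with h | h | h
      · rw [if_pos h.le, if_pos (show j + 1 ≤ j0 by omega)]
        rcases hgood' j h with h1 | h1 | ⟨a, h1⟩
        · exact absurd h1 (hlm j h)
        · rw [h1]; exact Red2Edge.sstarEll
        · rw [h1]; exact Red2Edge.sstarLetter a
      · subst h
        rw [if_pos (le_refl j0), if_neg (show ¬ j0 + 1 ≤ j0 by omega), hx0]
        exact Red2Edge.sstarExit
      · rw [if_neg (show ¬ j ≤ j0 by omega), if_neg (show ¬ j + 1 ≤ j0 by omega),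
          hstar j (htrue j h)]
        exact Red2Edge.tLoop
  · intro hsub
    rw [Set.eq_univ_iff_forall]
    intro w
    set L : ℤ := (w.length : ℤ) with hLdef
    have hL0 : 0 ≤ L := by positivity
    set x : ℤ → SymB A := fun j =>
      if 1 ≤ j then SymB.star
      else if j = 0 then SymB.rm
      else if j = -L - 1 then SymB.lm
      else if -L ≤ j then (w.map SymB.letter).getD (j + L).toNat SymB.ell
      else SymB.ell with hxdef
    have hget : ∀ k : ℕ, (w.map SymB.letter).getD k SymB.ell = SymB.ell ∨
        ∃ a, (w.map SymB.letter).getD k SymB.ell = SymB.letter a := by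
      intro k
      by_cases hk : k < (w.map SymB.letter).length
      · right
        refine ⟨w.get ⟨k, by simpa using hk⟩, ?_⟩
        rw [List.getD_eq_getElem _ _ hk, List.getElem_map]
        rfl
      · left
        exact List.getD_eq_default _ _ (by omega)
    have hx0 : x 0 = SymB.rm := by
      simp [hxdef]
    have hxlm : x (-L - 1) = SymB.lm := by
      have h1 : ¬ (1 ≤ -L - 1) := by omega
      have h2 : ¬ (-L - 1 = 0) := by omega
      simp [hxdef, h1, h2]
    have hxmid : ∀ (k : ℕ) (hk : k < w.length),
        x (-L + (k:ℤ)) = SymB.letter (w.get ⟨k, hk⟩) := by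
      intro k hk
      have hkL : (k : ℤ) < L := by omega
      simp only [hxdef]
      rw [if_neg (by omega), if_neg (by omega), if_neg (by omega), if_pos (by omega)]
      have ht : (-L + (k:ℤ) + L).toNat = k := by omega
      rw [ht, List.getD_eq_getElem _ _ (by simpa using hk), List.getElem_map]
      rfl
    have hxH : x ∈ (H2 A).shift := by
      refine ⟨fun j => decide (1 ≤ j), fun j => ?_⟩
      show (decide (1 ≤ j) = false ∧ decide (1 ≤ j + 1) = false ∧ _) ∨
        (decide (1 ≤ j) = false ∧ decide (1 ≤ j + 1) = true ∧ _) ∨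
        (decide (1 ≤ j) = true ∧ decide (1 ≤ j + 1) = true ∧ _)
      by_cases h1 : 1 ≤ j
      · right; right
        refine ⟨by simp [h1], by simp [show (1:ℤ) ≤ j + 1 by omega], ?_⟩
        simp only [hxdef]
        rw [if_pos h1]
      · by_cases h0 : j = 0
        · right; left
          refine ⟨by simp [h1], by simp [show (1:ℤ) ≤ j + 1 by omega], ?_⟩
          simp only [hxdef]
          rw [if_neg h1, if_pos h0]
        · left
          refine ⟨by simp [h1], by simp [show ¬ (1:ℤ) ≤ j + 1 by omega], ?_⟩
          simp only [hxdef]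
          rw [if_neg h1, if_neg h0]
          by_cases h2 : j = -L - 1
          · rw [if_pos h2]; exact Or.inl rfl
          · rw [if_neg h2]
            by_cases h3 : -L ≤ j
            · rw [if_pos h3]
              rcases hget (j + L).toNat with h | ⟨a, h⟩
              · exact Or.inr (Or.inl h)
              · exact Or.inr (Or.inr ⟨a, h⟩)
            · rw [if_neg h3]
              exact Or.inr (Or.inl rfl)
    obtain ⟨v, hv⟩ := hsub hxH
    have hv' : ∀ j : ℤ, Red2Edge M (v j) (x j) (v (j + 1)) := hv
    have h0 := hv' 0
    rw [hx0] at h0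
    rcases edge_rm_cases h0 with ⟨hs0, _⟩ | ⟨i, q, hs0, hq, _⟩
    · -- v 0 = s* : impossible, trace back to the ◁
      exfalso
      have hback : ∀ k : ℕ, (k:ℤ) ≤ L → v (-(k:ℤ)) = V2.sstar := by
        intro k
        induction k with
        | zero => intro _; simpa using hs0
        | succ k ih =>
          intro hk
          push_cast at hk
          have hik := ih (by omega)
          have he := hv' (-(k:ℤ) - 1)
          rw [show -(k:ℤ) - 1 + 1 = -(k:ℤ) by ring, hik] at he
          have := edge_into_sstar he
          rw [show (-((k:ℕ)+1:ℕ) : ℤ) = -(k:ℤ) - 1 by push_cast; ring]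
          exact this
      have hL' : v (-L) = V2.sstar := by
        have := hback w.length (by omega)
        rwa [show (-(w.length:ℤ)) = -L by rw [hLdef]] at this
      have he := hv' (-L - 1)
      rw [show -L - 1 + 1 = -L by ring, hL', hxlm] at he
      exact edge_lm_not_sstar he
    · -- v 0 is an accepting state of component i
      have hback : ∀ k : ℕ, (k:ℤ) ≤ L → ∃ r, v (-(k:ℤ)) = V2.st i r := by
        intro k
        induction k with
        | zero => intro _; exact ⟨q, by simpa using hs0⟩
        | succ k ih =>
          intro hk
          push_cast at hk
          obtain ⟨r, hr⟩ := ih (by omega)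
          have he := hv' (-(k:ℤ) - 1)
          rw [show -(k:ℤ) - 1 + 1 = -(k:ℤ) by ring, hr] at he
          obtain ⟨q', hq'⟩ := edge_into_st he
          refine ⟨q', ?_⟩
          rw [show (-((k:ℕ)+1:ℕ) : ℤ) = -(k:ℤ) - 1 by push_cast; ring]
          exact hq'
      obtain ⟨r, hr⟩ := hback w.length (by omega)
      rw [show (-(w.length:ℤ)) = -L by rw [hLdef]] at hr
      have he := hv' (-L - 1)
      rw [show -L - 1 + 1 = -L by ring, hr, hxlm] at he
      have hrstart : r = (M i).start := edge_lm_into_st he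
      rw [hrstart] at hr
      -- forward induction reading w
      have hfwd : ∀ k : ℕ, k ≤ w.length →
          v (-L + (k:ℤ)) = V2.st i ((M i).evalFrom (M i).start (w.take k)) := by
        intro k
        induction k with
        | zero =>
          intro _
          simpa [DFA'.evalFrom] using hr
        | succ k ih =>
          intro hk
          have hik := ih (by omega)
          have he := hv' (-L + (k:ℤ))
          rw [hxmid k (by omega), hik] at he
          have := edge_letter_from_st he
          rw [show (-L + ((k:ℕ)+1:ℕ) : ℤ) = -L + (k:ℤ) + 1 by push_cast; ring, this]
          congr 1
          rw [List.take_succ, List.getElem?_eq_getElem (by omega), Option.toList_some,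
            evalFrom_concat]
          rfl
      have hfin := hfwd w.length (le_refl _)
      rw [show (-L + (w.length:ℤ)) = 0 by omega, List.take_length, hs0] at hfin
      have hqe : q = (M i).evalFrom (M i).start w := by
        simpa [V2.st.injEq] using hfin
      refine Set.mem_iUnion.2 ⟨i, ?_⟩
      show (M i).evalFrom (M i).start w ∈ (M i).accept
      rw [← hqe]
      exact hq
end

section
/- Let M_1, …, M_n be DFAs over a common alphabet Σ, and let G be the labeled graph obtained from the second reduction construction applied to M_1, …, M_n. Then ⋃_{i=1}^n L(M_i) = Σ* if and only if ⟨G⟩ is a shift of finite type. -/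
/-!
If every word is accepted by some `Mᵢ`, then `⟨G⟩` is the 1-step SFT in which a symbol is
followed by `⋆` exactly when it is `⋆` or `▷`. Indeed, a point of that SFT with a `▷` is read,
up to the `▷`, either in `s*` (when no `◁` precedes it) or in the automaton accepting the letters
after the last `◁`; a point avoiding `▷` and `⋆` is read in any `Mᵢ`, where a bi-infinite run
exists by compactness of `Qᵢ^ℤ`.

Conversely, if `v` is rejected by every `Mᵢ`, then `…◁◁ v ℓᴺ ▷ ⋆⋆…` is not in `⟨G⟩`: after a `◁`
a path is in some `Mᵢ`, and it reaches the `▷` in the state that `Mᵢ` reaches on `v`. Yet each of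
its blocks of length `N` occurs in `⟨G⟩`, so `⟨G⟩` is not defined by forbidden words of length at
most `N`.
-/

theorem exists_orbit {S : Type*} [Finite S] [Nonempty S] (f : ℤ → S → S) :
    ∃ u : ℤ → S, ∀ j, u (j + 1) = f j (u j) := by
  let _ : TopologicalSpace S := ⊥
  have : DiscreteTopology S := ⟨rfl⟩
  let C : ℕ → Set (ℤ → S) := fun N => {u | ∀ j, -(N : ℤ) ≤ j → u (j + 1) = f j (u j)}
  have hC_closed (N : ℕ) : IsClosed (C N) := by
    simp only [C, Set.ofPred_forall]
    exact isClosed_iInter fun j => isClosed_iInter fun _ =>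
      isClosed_eq (continuous_apply _) (continuous_of_discreteTopology.comp (continuous_apply j))
  have hC_nonempty (N : ℕ) : (C N).Nonempty := by
    let g : ℕ → S := fun k => Nat.rec (Classical.arbitrary S) (fun k s => f (k - N) s) k
    refine ⟨fun j => g (j + N).toNat, fun j hj => ?_⟩
    have : (j + 1 + N).toNat = (j + N).toNat + 1 := by omega
    simp only [this, g]
    congr 1
    omega
  obtain ⟨u, hu⟩ := IsCompact.nonempty_iInter_of_sequence_nonempty_isCompact_isClosed C
    (fun N u hu j hj => hu j (by omega)) hC_nonempty (hC_closed 0).isCompact hC_closed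
  exact ⟨u, fun j => Set.mem_iInter.mp hu (-j).toNat j (by omega)⟩

def window {α : Type*} (x : ℤ → α) (j : ℤ) (k : ℕ) : List α :=
  (List.range k).map fun m : ℕ => x (j + m)

lemma window_succ {α : Type*} (x : ℤ → α) (j : ℤ) (k : ℕ) :
    window x j (k + 1) = window x j k ++ [x (j + k)] := by
  simp [window, List.range_succ]

lemma mem_window {α : Type*} {x : ℤ → α} {j : ℤ} {k : ℕ} {c : α} :
    c ∈ window x j k ↔ ∃ m < k, x (j + m) = c := by
  simp [window]

lemma eq_foldl_window {α S : Type*} (f : α → S → S) (x : ℤ → α) (u : ℤ → S) (j : ℤ) (k : ℕ)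
    (hu : ∀ m < k, u (j + m + 1) = f (x (j + m)) (u (j + m))) :
    u (j + k) = (window x j k).foldl (fun s c => f c s) (u j) := by
  induction k with
  | zero => simp [window]
  | succ k ih =>
    rw [window_succ, List.foldl_append, List.foldl_cons, List.foldl_nil,
      ← ih fun m hm => hu m (by omega), ← hu k (by omega)]
    push_cast
    ring_nf

namespace LabeledGraph

variable {V A : Type}

lemma mem_shift_of_splice (G : LabeledGraph V A) (x : ℤ → A) (p : ℤ) (v w : ℤ → V)
    (hv : ∀ j < p, G.Edge (v j) (x j) (v (j + 1))) (hp : G.Edge (v p) (x p) (w (p + 1)))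
    (hw : ∀ j > p, G.Edge (w j) (x j) (w (j + 1))) : x ∈ G.shift := by
  refine ⟨fun j => if j ≤ p then v j else w j, fun j => ?_⟩
  rcases lt_trichotomy j p with h | rfl | h
  · simpa [h.le, Int.add_one_le_iff.mpr h] using hv j h
  · simpa using hp
  · simpa [not_le.mpr h, not_le.mpr (h.trans (lt_add_one j))] using hw j h

end LabeledGraph

lemma IsSFT.exists_mem_of_forall_agree {A : Type} {X : Set (ℤ → A)} (hX : IsSFT X) :
    ∃ N : ℕ, ∀ x : ℤ → A, (∀ i : ℤ, ∃ y ∈ X, ∀ k < N, x (i + k) = y (i + k)) → x ∈ X := by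
  obtain ⟨F, hF, rfl⟩ := hX
  obtain ⟨N, hN⟩ := (hF.image List.length).bddAbove
  refine ⟨N, fun x hx w hw ⟨i, hi⟩ => ?_⟩
  obtain ⟨y, hy, hxy⟩ := hx i
  have hlen : w.length ≤ N := hN ⟨w, hw, rfl⟩
  exact hy w hw ⟨i, fun k => (hxy k (by omega)).symm.trans (hi k)⟩

lemma isSFT_setOf_forall_rel {A : Type} [Finite A] (R : A → A → Prop) :
    IsSFT {x : ℤ → A | ∀ j, R (x j) (x (j + 1))} := by
  refine ⟨{w | ∃ a b, w = [a, b] ∧ ¬ R a b}, ?_, Set.ext fun x => ⟨fun hx => ?_, fun hx j => ?_⟩⟩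
  · refine (Set.finite_range fun p : A × A => [p.1, p.2]).subset ?_
    rintro w ⟨a, b, rfl, -⟩
    exact ⟨(a, b), rfl⟩
  · rintro w ⟨a, b, rfl, hab⟩ ⟨i, hi⟩
    have h0 : x i = a := by simpa using hi 0
    have h1 : x (i + 1) = b := by simpa using hi 1
    exact hab (h0 ▸ h1 ▸ hx i)
  · by_contra hR
    exact hx [x j, x (j + 1)] ⟨_, _, rfl, hR⟩ ⟨j, fun k => by fin_cases k <;> simp⟩

namespace SymB

variable {A : Type}

def toLetter : SymB A → Option A
  | letter a => some a
  | _ => none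

instance [Finite A] : Finite (SymB A) :=
  Finite.of_injective (fun c : SymB A => match c with
      | letter a => (Sum.inl a : A ⊕ Fin 4)
      | lm => .inr 0 | rm => .inr 1 | ell => .inr 2 | star => .inr 3)
    fun c c' h => by cases c <;> cases c' <;> simp_all

end SymB

namespace DFA'

variable {Q A : Type}

def stepSym (D : DFA' Q A) : SymB A → Q → Q
  | .letter a, q => D.step q a
  | .lm, _ => D.start
  | _, q => q

lemma foldl_stepSym (D : DFA' Q A) (cs : List (SymB A)) (hcs : SymB.lm ∉ cs) (q : Q) :
    cs.foldl (fun q c => D.stepSym c q) q = D.evalFrom q (cs.filterMap SymB.toLetter) := by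
  induction cs generalizing q with
  | nil => rfl
  | cons c cs ih =>
    rw [List.mem_cons, not_or] at hcs
    rw [List.foldl_cons, ih hcs.2]
    cases c <;> first | exact absurd rfl hcs.1 | rfl

end DFA'

namespace Red2Edge

variable {n : ℕ} {Q : Fin n → Type} {A : Type} {M : ∀ i, DFA' (Q i) A}

lemma st_of_eq_stepSym {i : Fin n} {q r : Q i} {c : SymB A} (hr : r = (M i).stepSym c q)
    (hrm : c ≠ .rm) (hstar : c ≠ .star) : Red2Edge M (.st i q) c (.st i r) := by
  subst hr
  cases c
  · exact dfaStep i q _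
  · exact back i q
  · exact absurd rfl hrm
  · exact ellLoop i q
  · exact absurd rfl hstar

lemma eq_st_stepSym {i : Fin n} {q : Q i} {c : SymB A} {r : V2 Q}
    (h : Red2Edge M (.st i q) c r) (hrm : c ≠ .rm) : r = .st i ((M i).stepSym c q) := by
  cases h
  · rfl
  · rfl
  · exact absurd rfl hrm
  · rfl

lemma mem_accept {i : Fin n} {q : Q i} {r : V2 Q} (h : Red2Edge M (.st i q) .rm r) :
    q ∈ (M i).accept := by
  cases h
  assumption

lemma sstar_sstar {c : SymB A} (hlm : c ≠ .lm) (hrm : c ≠ .rm) (hstar : c ≠ .star) :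
    Red2Edge M .sstar c .sstar := by
  cases c
  · exact sstarLetter _
  · exact absurd rfl hlm
  · exact absurd rfl hrm
  · exact sstarEll
  · exact absurd rfl hstar

lemma star_iff {p q : V2 Q} {c : SymB A} (h : Red2Edge M p c q) : c = .star ↔ p = .t := by
  cases h <;> simp

lemma eq_t_iff {p q : V2 Q} {c : SymB A} (h : Red2Edge M p c q) :
    q = .t ↔ c = .star ∨ c = .rm := by
  cases h <;> simp

lemma exists_eq_st_start {p q : V2 Q} (h : Red2Edge M p .lm q) :
    ∃ i, q = .st i (M i).start := by
  cases h
  exact ⟨_, rfl⟩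

end Red2Edge

/-- The point `…◁◁ v ℓᴺ ▷ ⋆⋆…`, with `v` starting at index `1`. -/
def rejectingPoint {A : Type} (v : List A) (N : ℕ) (j : ℤ) : SymB A :=
  if j ≤ 0 then .lm
  else if j ≤ v.length + N then ((v[(j - 1).toNat]?).map .letter).getD .ell
  else if j = v.length + N + 1 then .rm else .star

section RejectingPoint

variable {A : Type} (v : List A) (N : ℕ)

lemma rejectingPoint_ne {j : ℤ} (hj : j < v.length + N + 1) :
    rejectingPoint v N j ≠ .rm ∧ rejectingPoint v N j ≠ .star := by
  unfold rejectingPoint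
  split_ifs
  · simp
  · cases v[(j - 1).toNat]? <;> simp
  · omega
  · omega

lemma rejectingPoint_eq_ell {j : ℤ} (h1 : v.length < j) (h2 : j ≤ v.length + N) :
    rejectingPoint v N j = .ell := by
  rw [rejectingPoint, if_neg (by omega), if_pos h2, List.getElem?_eq_none (by omega)]
  rfl

lemma rejectingPoint_rm : rejectingPoint v N (v.length + N + 1) = .rm := by
  rw [rejectingPoint, if_neg (by omega), if_neg (by omega), if_pos rfl]

lemma rejectingPoint_star {j : ℤ} (hj : v.length + N + 1 < j) : rejectingPoint v N j = .star := by
  rw [rejectingPoint, if_neg (by omega), if_neg (by omega), if_neg (by omega)]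

lemma window_rejectingPoint :
    window (rejectingPoint v N) 1 (v.length + N) = v.map .letter ++ List.replicate N .ell := by
  refine List.ext_getElem (by simp [window]) fun m h1 h2 => ?_
  rw [List.length_append, List.length_map, List.length_replicate] at h2
  simp only [window, List.getElem_map, List.getElem_range, rejectingPoint, List.getElem_append,
    List.length_map, List.getElem_replicate]
  rw [if_neg (by omega), if_pos (by omega), add_sub_cancel_left, Int.toNat_natCast]
  by_cases h : m < v.length <;> simp [h]

end RejectingPoint

section Red2Shift

variable {n : ℕ} {Q : Fin n → Type} {A : Type} {M : ∀ i, DFA' (Q i) A}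

lemma eq_st_foldl_window {v : ℤ → V2 Q} {x : ℤ → SymB A}
    (hv : ∀ j, Red2Edge M (v j) (x j) (v (j + 1))) {j : ℤ} {i : Fin n} {q : Q i}
    (hj : v j = .st i q) (k : ℕ) (hk : ∀ m < k, x (j + m) ≠ .rm) :
    v (j + k) = .st i ((window x j k).foldl (fun q c => (M i).stepSym c q) q) := by
  induction k with
  | zero => simpa [window] using hj
  | succ k ih =>
    have h := hv (j + k)
    rw [ih fun m hm => hk m (by omega)] at h
    rw [window_succ, List.foldl_append, List.foldl_cons, List.foldl_nil, Nat.cast_succ,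
      ← add_assoc]
    exact h.eq_st_stepSym (hk k (by omega))

def Red2Allowed (a b : SymB A) : Prop := b = .star ↔ a = .star ∨ a = .rm

lemma shift_red2_subset :
    (Red2 M).shift ⊆ {x | ∀ j, Red2Allowed (x j) (x (j + 1))} := by
  rintro x ⟨v, hv⟩ j
  exact (hv (j + 1)).star_iff.trans (hv j).eq_t_iff

lemma star_of_forall_red2Allowed {x : ℤ → SymB A} (hx : ∀ j, Red2Allowed (x j) (x (j + 1)))
    {j : ℤ} (hj : x j = .star ∨ x j = .rm) {k : ℤ} (hjk : j < k) : x k = .star :=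
  Int.leInduction ((hx j).mpr hj) (fun m _ ih => (hx m).mpr (Or.inl ih)) k hjk

lemma mem_shift_red2_of_rm_of_forall_ne (M : ∀ i, DFA' (Q i) A) {x : ℤ → SymB A} {p : ℤ}
    (hhead : ∀ j < p, x j ≠ .lm ∧ x j ≠ .rm ∧ x j ≠ .star) (hp : x p = .rm)
    (htail : ∀ j > p, x j = .star) : x ∈ (Red2 M).shift :=
  (Red2 M).mem_shift_of_splice x p (fun _ => .sstar) (fun _ => .t)
    (fun j hj => Red2Edge.sstar_sstar (hhead j hj).1 (hhead j hj).2.1 (hhead j hj).2.2)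
    (hp ▸ Red2Edge.sstarExit) (fun j hj => htail j hj ▸ Red2Edge.tLoop)

lemma exists_mem_lang_of_rejectingPoint_mem_shift {v : List A} {N : ℕ}
    (hx : rejectingPoint v N ∈ (Red2 M).shift) : ∃ i, v ∈ (M i).lang := by
  obtain ⟨w, hw⟩ := hx
  have h0 := hw 0
  rw [show rejectingPoint v N 0 = .lm from if_pos le_rfl, zero_add] at h0
  obtain ⟨i, hi⟩ := Red2Edge.exists_eq_st_start h0
  have hP := eq_st_foldl_window hw hi (v.length + N) fun m hm h => by
    have : SymB.rm ∈ window (rejectingPoint v N) 1 (v.length + N) := mem_window.mpr ⟨m, hm, h⟩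
    simp [window_rejectingPoint] at this
  rw [window_rejectingPoint, DFA'.foldl_stepSym _ _ (by simp),
    show (1 : ℤ) + ↑(v.length + N) = v.length + N + 1 by push_cast; ring] at hP
  have hrm := hw (v.length + N + 1)
  rw [hP, rejectingPoint_rm] at hrm
  refine ⟨i, ?_⟩
  simpa [DFA'.lang, SymB.toLetter, Function.comp_def, List.filterMap_replicate]
    using Red2Edge.mem_accept hrm

variable [∀ i, Finite (Q i)]

lemma mem_shift_red2_of_forall_ne (M : ∀ i, DFA' (Q i) A) (i : Fin n) {x : ℤ → SymB A}
    (hx : ∀ j, x j ≠ .rm ∧ x j ≠ .star) : x ∈ (Red2 M).shift := by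
  have : Nonempty (Q i) := ⟨(M i).start⟩
  obtain ⟨u, hu⟩ := exists_orbit fun j => (M i).stepSym (x j)
  exact ⟨fun j => .st i (u j), fun j => Red2Edge.st_of_eq_stepSym (hu j) (hx j).1 (hx j).2⟩

lemma mem_shift_red2_of_lm_of_rm (hU : ∀ w, ∃ i, w ∈ (M i).lang) {x : ℤ → SymB A} {m p : ℤ}
    (hmp : m < p) (hm : x m = .lm) (hmid : ∀ j, m < j → j < p → x j ≠ .lm)
    (hhead : ∀ j < p, x j ≠ .rm ∧ x j ≠ .star) (hp : x p = .rm)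
    (htail : ∀ j > p, x j = .star) : x ∈ (Red2 M).shift := by
  set K := (p - (m + 1)).toNat
  set w := (window x (m + 1) K).filterMap SymB.toLetter
  obtain ⟨i, hi⟩ := hU w
  have : Nonempty (Q i) := ⟨(M i).start⟩
  obtain ⟨u, hu⟩ := exists_orbit fun j => (M i).stepSym (x j)
  have hlm : SymB.lm ∉ window x (m + 1) K := by
    rw [mem_window]
    rintro ⟨k, hk, hxk⟩
    exact hmid _ (by omega) (by omega) hxk
  have hup : u p = (M i).evalFrom (M i).start w := by
    have h := eq_foldl_window (M i).stepSym x u (m + 1) K fun k _ => hu _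
    rwa [hu m, hm, DFA'.foldl_stepSym _ _ hlm, show m + 1 + (K : ℤ) = p by omega] at h
  refine (Red2 M).mem_shift_of_splice x p (fun j => .st i (u j)) (fun _ => .t)
    (fun j hj => Red2Edge.st_of_eq_stepSym (hu j) (hhead j hj).1 (hhead j hj).2) ?_
    (fun j hj => htail j hj ▸ Red2Edge.tLoop)
  exact hp ▸ Red2Edge.exitAcc i _ (hup ▸ hi)

lemma mem_shift_red2_of_rm (hU : ∀ w, ∃ i, w ∈ (M i).lang) {x : ℤ → SymB A}
    (hx : ∀ j, Red2Allowed (x j) (x (j + 1))) {p : ℤ} (hp : x p = .rm) :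
    x ∈ (Red2 M).shift := by
  have htail : ∀ j > p, x j = .star := fun j hj => star_of_forall_red2Allowed hx (Or.inr hp) hj
  have hhead : ∀ j < p, x j ≠ .rm ∧ x j ≠ .star := fun j hj => by
    refine ⟨fun hc => ?_, fun hc => ?_⟩ <;>
      simpa [hp] using star_of_forall_red2Allowed hx (by simp [hc]) hj
  by_cases hlm : ∃ m < p, x m = .lm
  · obtain ⟨m, ⟨hmp, hm⟩, hmax⟩ := Int.exists_greatest_of_bdd ⟨p, fun z hz => hz.1.le⟩ hlm
    exact mem_shift_red2_of_lm_of_rm hU hmp hm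
      (fun j hmj hjp hj => absurd (hmax j ⟨hjp, hj⟩) (not_le.mpr hmj)) hhead hp htail
  · push Not at hlm
    exact mem_shift_red2_of_rm_of_forall_ne M (fun j hj => ⟨hlm j hj, hhead j hj⟩) hp htail

lemma mem_shift_red2_of_forall_red2Allowed (hU : ∀ w, ∃ i, w ∈ (M i).lang) {x : ℤ → SymB A}
    (hx : ∀ j, Red2Allowed (x j) (x (j + 1))) : x ∈ (Red2 M).shift := by
  by_cases hrm : ∃ p, x p = .rm
  · obtain ⟨p, hp⟩ := hrm
    exact mem_shift_red2_of_rm hU hx hp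
  push Not at hrm
  have hstep (j : ℤ) : x (j + 1) = .star ↔ x j = .star := (hx j).trans (or_iff_left (hrm j))
  have hstar (j : ℤ) : x j = .star ↔ x 0 = .star := by
    induction j with
    | zero => rfl
    | succ k ih => exact (hstep k).trans ih
    | pred k ih => exact (hstep (-k - 1)).symm.trans (by rwa [sub_add_cancel])
  by_cases h0 : x 0 = .star
  · exact ⟨fun _ => .t, fun j => (hstar j).mpr h0 ▸ Red2Edge.tLoop⟩
  · obtain ⟨i, -⟩ := hU []
    exact mem_shift_red2_of_forall_ne M i fun j => ⟨hrm j, fun h => h0 ((hstar j).mp h)⟩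

lemma shift_red2_eq (hU : ∀ w, ∃ i, w ∈ (M i).lang) :
    (Red2 M).shift = {x | ∀ j, Red2Allowed (x j) (x (j + 1))} :=
  shift_red2_subset.antisymm fun _ hx => mem_shift_red2_of_forall_red2Allowed hU hx

lemma exists_mem_shift_red2_agree_rejectingPoint (M : ∀ i, DFA' (Q i) A) (hn : 0 < n)
    (v : List A) (N : ℕ) (i : ℤ) :
    ∃ y ∈ (Red2 M).shift, ∀ k < N, rejectingPoint v N (i + k) = y (i + k) := by
  set x := rejectingPoint v N
  rcases le_or_gt i (v.length + 1) with hi | hi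
  · refine ⟨fun j => if j < v.length + N + 1 then x j else .ell,
      mem_shift_red2_of_forall_ne M ⟨0, hn⟩ fun j => ?_, fun k hk => (if_pos (by omega)).symm⟩
    split_ifs with hj
    · exact rejectingPoint_ne v N hj
    · simp
  · refine ⟨fun j => if j ≤ v.length then .ell else x j,
      mem_shift_red2_of_rm_of_forall_ne M (p := v.length + N + 1) ?_ ?_ ?_,
      fun k hk => (if_neg (by omega)).symm⟩
    · intro j hj
      split_ifs with hjL
      · simp
      · simp [x, rejectingPoint_eq_ell v N (not_le.mp hjL) (by omega)]
    · exact (if_neg (by omega)).trans (rejectingPoint_rm v N)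
    · exact fun j hj => (if_neg (by omega)).trans (rejectingPoint_star v N hj)

lemma exists_mem_lang_of_isSFT (hn : 0 < n) (hS : IsSFT (Red2 M).shift) (v : List A) :
    ∃ i, v ∈ (M i).lang := by
  obtain ⟨N, hN⟩ := hS.exists_mem_of_forall_agree
  exact exists_mem_lang_of_rejectingPoint_mem_shift
    (hN _ (exists_mem_shift_red2_agree_rejectingPoint M hn v N))

end Red2Shift

/-- Let `M_1, …, M_n` be DFAs over a common alphabet `Σ`, and let `G` be the
graph of the second reduction construction. Then `⋃ᵢ L(Mᵢ) = Σ*` iff `⟨G⟩` is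
a shift of finite type. -/
theorem stmt14 {n : ℕ} {Q : Fin n → Type} {A : Type}
    [Fintype A] [∀ i, Fintype (Q i)] (hn : 0 < n)
    (M : ∀ i, DFA' (Q i) A) :
    (⋃ i, (M i).lang) = Set.univ ↔ IsSFT (Red2 M).shift := by
  refine ⟨fun hU => ?_, fun hS => ?_⟩
  · have hU' (w : List A) : ∃ i, w ∈ (M i).lang := Set.mem_iUnion.mp (hU ▸ Set.mem_univ w)
    rw [shift_red2_eq hU']
    exact isSFT_setOf_forall_rel _
  · exact Set.eq_univ_of_forall fun v => Set.mem_iUnion.mpr (exists_mem_lang_of_isSFT hn hS v)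
end

section
/- For every integer k ≥ 0, the language ⋂_{i=0}^k L(M_{i,k}) is nonempty, and the minimum length of a word in ⋂_{i=0}^k L(M_{i,k}) is exactly 2^k. -/
/-- The common state set `{q_0, q_1, q*}` of the DFAs `M_{i,k}`. -/
inductive CState : Type
  | q0 : CState
  | q1 : CState
  | qstar : CState

/-- The transition function of `M_{i,k}` (with the input symbol `j` read as a
natural number). For `i = 0`: `δ(q_0,j) = q_1` if `j = 0` and `q*` otherwise;
`δ(q_1,j) = q_1` if `j ≠ 0` and `q*` if `j = 0`. For `i ≥ 1`:
`δ(q_0,j) = q_0` if `j > i`, `q_1` if `j < i`, `q*` if `j = i`;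
`δ(q_1,j) = q_0` if `j = i`, `q_1` if `j > i`, `q*` if `j < i`.
In all cases `δ(q*,j) = q*`. -/
def cstep (i : ℕ) : CState → ℕ → CState
  | .q0, j =>
      if i = 0 then (if j = 0 then .q1 else .qstar)
      else (if i < j then .q0 else if j < i then .q1 else .qstar)
  | .q1, j =>
      if i = 0 then (if j = 0 then .qstar else .q1)
      else (if j = i then .q0 else if i < j then .q1 else .qstar)
  | .qstar, _ => .qstar

/-- The DFA `M_{i,k}` over the alphabet `{0, 1, …, k}`, with initial state
`q_0` and accepting set `{q_1}` if `i = 0` and `{q_0}` if `i ≥ 1`. -/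
def Mik (i k : ℕ) : DFA' CState (Fin (k + 1)) where
  step := fun q a => cstep i q (a : ℕ)
  start := .q0
  accept := if i = 0 then {CState.q1} else {CState.q0}

/-!
For `i ≥ 1` the letters `> i` do not move `M_{i,k}`, and the remaining letters must alternate
between a letter `< i` and the letter `i`, ending with `i`. So a common word has as many letters `i`
as letters `< i`, i.e. the number of letters `≤ i` doubles from `i - 1` to `i`; as `M_{0,k}` forces
a letter `0`, the length is at least `2^k`. Conversely, inserting `k + 1` after every letter of a
common word for `k` gives one for `k + 1`, starting from the word `0`.
-/

open CState

theorem List.foldl_flatMap_pair {σ α : Type*} (f : σ → α → σ) (j : α) (l : List α) (q : σ) :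
    (l.flatMap fun a => [a, j]).foldl f q = l.foldl (fun q a => f (f q a) j) q := by
  induction l generalizing q with
  | nil => rfl
  | cons a l ih => simp [ih]

theorem List.foldl_eq_self_of_forall_mem {σ α : Type*} {f : σ → α → σ} {q : σ} {l : List α}
    (h : ∀ a ∈ l, f q a = q) : l.foldl f q = q := by
  induction l with
  | nil => rfl
  | cons a l ih => simp_all

theorem foldl_cstep_qstar (i : ℕ) (l : List ℕ) : l.foldl (cstep i) qstar = qstar :=
  List.foldl_fixed' (fun _ => rfl) l

theorem cstep_of_lt {i j : ℕ} (hi : i ≠ 0) (h : i < j) (q : CState) : cstep i q j = q := by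
  cases q <;> simp [cstep, hi, h, h.ne']

theorem cstep_zero_ne_q0 (q : CState) (a : ℕ) : cstep 0 q a ≠ q0 := by
  cases q <;> by_cases a = 0 <;> simp [cstep, *]

theorem cstep_zero_of_ne_q0 {j : ℕ} (hj : j ≠ 0) {q : CState} (hq : q ≠ q0) :
    cstep 0 q j = q := by
  cases q <;> simp_all [cstep]

theorem cstep_cstep_self_of_lt {j a : ℕ} (hj : j ≠ 0) (ha : a < j) :
    cstep j (cstep j q0 a) j = q0 := by
  simp [cstep, hj, ha, ha.not_gt]

theorem cstep_cstep_of_lt {i j : ℕ} (h : i < j) (q : CState) (a : ℕ) :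
    cstep i (cstep i q a) j = cstep i q a := by
  rcases eq_or_ne i 0 with rfl | hi
  · exact cstep_zero_of_ne_q0 h.ne' (cstep_zero_ne_q0 q a)
  · exact cstep_of_lt hi h _

def acceptState (i : ℕ) : CState := if i = 0 then q1 else q0

theorem mem_lang_Mik_iff {i k : ℕ} {w : List (Fin (k + 1))} :
    w ∈ (Mik i k).lang ↔ (w.map Fin.val).foldl (cstep i) q0 = acceptState i := by
  simp only [DFA'.lang, DFA'.evalFrom, Mik, List.foldl_map, acceptState]
  split_ifs <;> rfl

def rulerWord : ℕ → List ℕ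
  | 0 => [0]
  | k + 1 => (rulerWord k).flatMap fun a => [a, k + 1]

theorem length_rulerWord (k : ℕ) : (rulerWord k).length = 2 ^ k := by
  induction k with
  | zero => rfl
  | succ k ih => simp [rulerWord, ih, pow_succ]

theorem lt_of_mem_rulerWord {k a : ℕ} (h : a ∈ rulerWord k) : a < k + 1 := by
  induction k generalizing a with
  | zero => simp_all [rulerWord]
  | succ k ih =>
    simp only [rulerWord, List.mem_flatMap, List.mem_cons, List.not_mem_nil] at h
    obtain ⟨b, hb, rfl | rfl | h⟩ := h
    · exact (ih hb).trans (by omega)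
    · omega
    · exact h.elim

theorem foldl_cstep_rulerWord {i k : ℕ} (h : i ≤ k) :
    (rulerWord k).foldl (cstep i) q0 = acceptState i := by
  induction k with
  | zero => simp_all [rulerWord, cstep, acceptState]
  | succ k ih =>
    rw [rulerWord, List.foldl_flatMap_pair]
    rcases h.lt_or_eq with h | rfl
    · simp only [cstep_cstep_of_lt h]
      exact ih (by omega)
    · rw [List.foldl_eq_self_of_forall_mem fun a ha =>
        cstep_cstep_self_of_lt k.succ_ne_zero (lt_of_mem_rulerWord ha)]
      simp [acceptState]

/-- Number of letters `< i` read but not yet matched by a letter `i`, in the run of `M_{i,k}`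
for `i ≠ 0`. -/
def CState.pending : CState → ℕ
  | q1 => 1
  | _ => 0

theorem pending_cstep_add {i a : ℕ} (hi : i ≠ 0) {q : CState} (h : cstep i q a ≠ qstar) :
    (cstep i q a).pending + (if a = i then 1 else 0) = q.pending + (if a < i then 1 else 0) := by
  rcases lt_trichotomy a i with ha | rfl | ha
  · cases q <;> simp_all [cstep, CState.pending, ha.ne, ha.not_gt]
  · cases q <;> simp_all [cstep, CState.pending]
  · cases q <;> simp_all [cstep, CState.pending, ha.ne', ha.not_gt]

theorem pending_foldl_add_countP {i : ℕ} (hi : i ≠ 0) (l : List ℕ) (q : CState)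
    (h : l.foldl (cstep i) q ≠ qstar) :
    (l.foldl (cstep i) q).pending + l.countP (· = i) = q.pending + l.countP (· < i) := by
  induction l generalizing q with
  | nil => rfl
  | cons a l ih =>
    rw [List.foldl_cons] at h ⊢
    have ha : cstep i q a ≠ qstar := fun ha => h (ha ▸ foldl_cstep_qstar i l)
    have := pending_cstep_add hi ha
    simp only [List.countP_cons, decide_eq_true_eq]
    split_ifs at this ⊢ <;> linarith [ih _ h]

theorem countP_eq_eq_countP_lt {i : ℕ} (hi : i ≠ 0) {l : List ℕ}
    (h : l.foldl (cstep i) q0 = q0) : l.countP (· = i) = l.countP (· < i) := by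
  simpa [h, CState.pending] using pending_foldl_add_countP hi l q0 (by simp [h])

theorem zero_mem_of_foldl_cstep_zero {l : List ℕ} (h : l.foldl (cstep 0) q0 = q1) : 0 ∈ l := by
  cases l with
  | nil => cases h
  | cons a l =>
    rcases eq_or_ne a 0 with rfl | ha
    · exact List.mem_cons_self
    · simp [cstep, ha, foldl_cstep_qstar] at h

theorem List.countP_lt_succ (n : ℕ) (l : List ℕ) :
    l.countP (· < n + 1) = l.countP (· < n) + l.countP (· = n) := by
  induction l with
  | nil => rfl
  | cons a l ih =>
    simp only [List.countP_cons, decide_eq_true_eq, ih]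
    split_ifs <;> omega

theorem two_pow_le_length {k : ℕ} {l : List ℕ} (hl : ∀ a ∈ l, a < k + 1)
    (h : ∀ i ≤ k, l.foldl (cstep i) q0 = acceptState i) : 2 ^ k ≤ l.length := by
  have h0 : 0 < l.countP (· = 0) :=
    List.countP_pos_iff.2 ⟨0, zero_mem_of_foldl_cstep_zero (h 0 k.zero_le), by simp⟩
  have hdouble : ∀ i ≤ k, 2 ^ i ≤ l.countP (· < i + 1) := by
    intro i hi
    induction i with
    | zero => simpa [List.countP_lt_succ] using h0
    | succ i ih =>
      have := countP_eq_eq_countP_lt i.succ_ne_zero (by simpa [acceptState] using h (i + 1) hi)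
      rw [List.countP_lt_succ, this, pow_succ]
      linarith [ih (by omega)]
  rw [← List.countP_eq_length.2 fun a ha => decide_eq_true (hl a ha)]
  exact hdouble k le_rfl

theorem mem_iInter_lang_Mik_iff {k : ℕ} {w : List (Fin (k + 1))} :
    w ∈ ⋂ i : Fin (k + 1), (Mik i k).lang ↔
      ∀ i ≤ k, (w.map Fin.val).foldl (cstep i) q0 = acceptState i := by
  simp only [Set.mem_iInter, mem_lang_Mik_iff]
  exact ⟨fun h i hi => h ⟨i, by omega⟩, fun h i => h i (by omega)⟩

/-- For every `k ≥ 0`, the language `⋂_{i=0}^k L(M_{i,k})` is nonempty, and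
the minimum length of a word in it is exactly `2^k`. -/
theorem stmt19 (k : ℕ) :
    (⋂ i : Fin (k + 1), (Mik (i : ℕ) k).lang).Nonempty ∧
      IsLeast { m : ℕ | ∃ w ∈ ⋂ i : Fin (k + 1), (Mik (i : ℕ) k).lang,
        w.length = m } (2 ^ k) := by
  obtain ⟨w, hw⟩ : ∃ w : List (Fin (k + 1)), w.map Fin.val = rulerWord k := by
    lift rulerWord k to List (Fin (k + 1)) with w
    · exact fun a => lt_of_mem_rulerWord
    exact ⟨w, rfl⟩
  have hw_mem : w ∈ ⋂ i : Fin (k + 1), (Mik i k).lang :=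
    mem_iInter_lang_Mik_iff.2 fun i hi => hw ▸ foldl_cstep_rulerWord hi
  refine ⟨⟨w, hw_mem⟩, ⟨w, hw_mem, by rw [← List.length_map, hw, length_rulerWord]⟩, ?_⟩
  rintro _ ⟨v, hv, rfl⟩
  rw [← List.length_map (f := Fin.val)]
  refine two_pow_le_length (fun a ha => ?_) (mem_iInter_lang_Mik_iff.1 hv)
  obtain ⟨b, -, rfl⟩ := List.mem_map.1 ha
  exact b.isLt
end
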